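/- arXiv:2103.15799 — 4 statements merged into one kernel-verified Lean document; each statement's English description precedes it below -/
import Mathlib

section
/- Let T be a complete first-order theory and let (āᵢ, b̄ᵢ : i ∈ ℚ) be a family of tuples in a model M of T which is L*-indiscernible when indexed by the random ordered bipartite graph G*. Then either the two sequences (āᵢ : i ∈ ℚ) and (b̄ᵢ : i ∈ ℚ) are mutually indiscernible, or there is a formula φ(x̄;ȳ) with |x̄| = |āᵢ|, |ȳ| = |b̄ᵢ|, and parameters from {āᵢ, b̄ᵢ : i ∈ ℚ}, which has the independence property. -/
open FirstOrder FirstOrder.Language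

universe u v

/-- An elementary extension of `M`: a structure together with an elementary embedding of `M`
into it. -/
structure ElemExt (L : FirstOrder.Language.{u, v}) (M : Type (max u v)) [L.Structure M] where
  carrier : Type (max u v)
  [str : L.Structure carrier]
  emb : M ↪ₑ[L] carrier

attribute [instance] ElemExt.str

/-- A formula `φ(x̄; ȳ)` (without parameters) has the order property with respect to a theory
`T` if in some model of `T` there are sequences `(āᵢ : i < ω)` and `(b̄ⱼ : j < ω)` such that
`φ(āᵢ; b̄ⱼ)` holds iff `i < j`. -/
def FormulaHasOP {L : FirstOrder.Language.{u, v}} (T : L.Theory) {α β : Type*}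
    (φ : L.Formula (α ⊕ β)) : Prop :=
  ∃ (N : FirstOrder.Language.Theory.ModelType.{u, v, max u v} T)
    (a : ℕ → α → N) (b : ℕ → β → N),
    ∀ i j : ℕ, φ.Realize (Sum.elim (a i) (b j)) ↔ i < j

/-- A formula `φ(x̄; ȳ)` (without parameters) has the independence property with respect to a
theory `T` if in some model of `T` there are tuples `(āᵢ : i < ω)` and `(b̄_S : S ⊆ ω)` such
that `φ(āᵢ; b̄_S)` holds iff `i ∈ S`. -/
def FormulaHasIP {L : FirstOrder.Language.{u, v}} (T : L.Theory) {α β : Type*}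
    (φ : L.Formula (α ⊕ β)) : Prop :=
  ∃ (N : FirstOrder.Language.Theory.ModelType.{u, v, max u v} T)
    (a : ℕ → α → N) (b : Set ℕ → β → N),
    ∀ (i : ℕ) (S : Set ℕ), φ.Realize (Sum.elim (a i) (b S)) ↔ i ∈ S

/-- A formula `φ(x̄; ȳ)` with parameters `c` from `M` has the order property if in some
elementary extension of `M` there are sequences `(āᵢ : i < ω)` and `(b̄ⱼ : j < ω)` such that
`φ(āᵢ; b̄ⱼ; c)` holds iff `i < j`. -/
def HasOPWithParams {L : FirstOrder.Language.{u, v}} {M : Type (max u v)} [L.Structure M]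
    {α β γ : Type*} (φ : L.Formula ((α ⊕ β) ⊕ γ)) (c : γ → M) : Prop :=
  ∃ (N : ElemExt L M) (a : ℕ → α → N.carrier) (b : ℕ → β → N.carrier),
    ∀ i j : ℕ, φ.Realize (Sum.elim (Sum.elim (a i) (b j)) (N.emb ∘ c)) ↔ i < j

/-- A formula `φ(x̄; ȳ)` with parameters `c` from `M` has the independence property if in some
elementary extension of `M` there are tuples `(āᵢ : i < ω)` and `(b̄_S : S ⊆ ω)` such that
`φ(āᵢ; b̄_S; c)` holds iff `i ∈ S`. -/
def HasIPWithParams {L : FirstOrder.Language.{u, v}} {M : Type (max u v)} [L.Structure M]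
    {α β γ : Type*} (φ : L.Formula ((α ⊕ β) ⊕ γ)) (c : γ → M) : Prop :=
  ∃ (N : ElemExt L M) (a : ℕ → α → N.carrier) (b : Set ℕ → β → N.carrier),
    ∀ (i : ℕ) (S : Set ℕ), φ.Realize (Sum.elim (Sum.elim (a i) (b S)) (N.emb ∘ c)) ↔ i ∈ S

/-- The family of tuples `(c̄ᵢ : i ∈ ι)` is an indiscernible sequence over the set `A`:
any two strictly increasing tuples of indices realize the same formulas with parameters
from `A`. -/
def IsIndiscernibleOver {L : FirstOrder.Language.{u, v}} {M : Type (max u v)} [L.Structure M]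
    {ι : Type*} [LinearOrder ι] {γ : Type*} (c : ι → γ → M) (A : Set M) : Prop :=
  ∀ (n m : ℕ) (i j : Fin n → ι), StrictMono i → StrictMono j →
    ∀ p : Fin m → M, (∀ l, p l ∈ A) →
      ∀ φ : L.Formula (Fin n × γ ⊕ Fin m),
        φ.Realize (Sum.elim (fun v : Fin n × γ => c (i v.1) v.2) p) ↔
          φ.Realize (Sum.elim (fun v : Fin n × γ => c (j v.1) v.2) p)

/-- The family of tuples `(c̄ᵢ : i ∈ ι)` is an indiscernible sequence. -/
def IsIndiscernible {L : FirstOrder.Language.{u, v}} {M : Type (max u v)} [L.Structure M]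
    {ι : Type*} [LinearOrder ι] {γ : Type*} (c : ι → γ → M) : Prop :=
  IsIndiscernibleOver (L := L) c ∅

/-- Two families of tuples are mutually indiscernible if each is indiscernible over the union
of the tuples of the other. -/
def MutuallyIndiscernible {L : FirstOrder.Language.{u, v}} {M : Type (max u v)} [L.Structure M]
    {ι : Type*} [LinearOrder ι] {γ δ : Type*} (a : ι → γ → M) (b : ι → δ → M) : Prop :=
  IsIndiscernibleOver (L := L) a (⋃ i, Set.range (b i)) ∧
    IsIndiscernibleOver (L := L) b (⋃ i, Set.range (a i))

/-- The family of tuples `(c̄ᵢ : i ∈ ι)` is totally indiscernible: any two tuples of distinct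
indices (in any order) realize the same formulas. -/
def IsTotallyIndiscernible {L : FirstOrder.Language.{u, v}} {M : Type (max u v)} [L.Structure M]
    {ι : Type*} [LinearOrder ι] {γ : Type*} (c : ι → γ → M) : Prop :=
  ∀ (n : ℕ) (i j : Fin n → ι), Function.Injective i → Function.Injective j →
    ∀ φ : L.Formula (Fin n × γ),
      φ.Realize (fun v : Fin n × γ => c (i v.1) v.2) ↔
        φ.Realize (fun v : Fin n × γ => c (j v.1) v.2)

/-- A set in a linear order is dense (in the order) and unbounded above and below. -/
def DenseUnbounded {α : Type*} [LinearOrder α] (S : Set α) : Prop :=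
  (∀ x y : α, x < y → ∃ z ∈ S, x < z ∧ z < y) ∧ (∀ x : α, ∃ z ∈ S, z < x) ∧
    (∀ x : α, ∃ z ∈ S, x < z)

/-- `R : α → β → Prop` presents (a structure isomorphic to) the random ordered bipartite
graph `G*`, i.e. the Fraïssé limit of finite ordered bipartite graphs: both parts are
countable nonempty dense linear orders without endpoints and the edge relation is generic. -/
def IsRandomOBG {α β : Type*} [LinearOrder α] [LinearOrder β] (R : α → β → Prop) : Prop :=
  Countable α ∧ Countable β ∧ Nonempty α ∧ Nonempty β ∧
    (∀ F G : Finset β, Disjoint F G →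
      DenseUnbounded {x : α | (∀ f ∈ F, R x f) ∧ ∀ g ∈ G, ¬R x g}) ∧
    (∀ F G : Finset α, Disjoint F G →
      DenseUnbounded {y : β | (∀ f ∈ F, R f y) ∧ ∀ g ∈ G, ¬R g y})

/-- An element of the random ordered bipartite graph `G*`, whose two parts `U(G*)` and
`V(G*)` are both identified with `ℚ`: `Sum.inl` is the `U`-part, `Sum.inr` the `V`-part. -/
abbrev GStarIdx : Type := ℚ ⊕ ℚ

/-- The index of the pair `(s, q)`: in the `U`-part if `s = true`, in the `V`-part
otherwise. -/
def mkIdx {n : ℕ} (s : Fin n → Bool) (q : Fin n → ℚ) : Fin n → GStarIdx := fun k =>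
  bif s k then Sum.inl (q k) else Sum.inr (q k)

/-- Two pairs of elements of `G*` (with edge relation `R`) have the same quantifier-free
`L*`-type, where `L* = {U, ≤_U, V, ≤_V, R}`. -/
def SamePairType (R : ℚ → ℚ → Prop) :
    GStarIdx → GStarIdx → GStarIdx → GStarIdx → Prop
  | Sum.inl p, Sum.inl q, Sum.inl p', Sum.inl q' => (p ≤ q ↔ p' ≤ q') ∧ (q ≤ p ↔ q' ≤ p')
  | Sum.inr p, Sum.inr q, Sum.inr p', Sum.inr q' => (p ≤ q ↔ p' ≤ q') ∧ (q ≤ p ↔ q' ≤ p')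
  | Sum.inl p, Sum.inr q, Sum.inl p', Sum.inr q' => R p q ↔ R p' q'
  | Sum.inr q, Sum.inl p, Sum.inr q', Sum.inl p' => R p q ↔ R p' q'
  | _, _, _, _ => False

/-- Two tuples of elements of `G*` (with edge relation `R`) have the same quantifier-free
`L*`-type. -/
def SameQfType (R : ℚ → ℚ → Prop) {n : ℕ} (i j : Fin n → GStarIdx) : Prop :=
  ∀ k l : Fin n, SamePairType R (i k) (i l) (j k) (j l)

/-- The variables carried by a coordinate of a mixed tuple: a `U`-index carries an `x̄`-tuple
of length `da`, a `V`-index a `ȳ`-tuple of length `db`. -/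
def MixVar (da db : ℕ) : Bool → Type
  | true => Fin da
  | false => Fin db

/-- Choose the `a`-tuple or the `b`-tuple according to the side. -/
def pickSide {M : Type*} {da db : ℕ} (a : Fin da → M) (b : Fin db → M) :
    (s : Bool) → MixVar da db s → M
  | true, w => a w
  | false, w => b w

/-- The family `(āᵢ : i ∈ U(G*) ≅ ℚ) ∪ (b̄ⱼ : j ∈ V(G*) ≅ ℚ)`, indexed by the random ordered
bipartite graph `G*` with edge relation `R`, is `L*`-indiscernible: index tuples with the same
quantifier-free `L*`-type in `G*` realize the same `L`-formulas in `M`. -/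
def IsLStarIndiscernible {L : FirstOrder.Language.{u, v}} {M : Type (max u v)} [L.Structure M]
    (R : ℚ → ℚ → Prop) {da db : ℕ} (a : ℚ → Fin da → M) (b : ℚ → Fin db → M) : Prop :=
  ∀ (n : ℕ) (s : Fin n → Bool) (q q' : Fin n → ℚ),
    SameQfType R (mkIdx s q) (mkIdx s q') →
      ∀ φ : L.Formula ((k : Fin n) × MixVar da db (s k)),
        φ.Realize (fun v => pickSide (a (q v.1)) (b (q v.1)) (s v.1) v.2) ↔
          φ.Realize (fun v => pickSide (a (q' v.1)) (b (q' v.1)) (s v.1) v.2)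

/-!
If the family, indexed by the complete ordered bipartite graph, is already indiscernible, the two
sequences are mutually indiscernible. Otherwise a formula `ψ` separates two configurations with
the same order type on each side, which differ only in their edges. By `L*`-indiscernibility the
truth value of `ψ` on a configuration depends only on its edge pattern, so changing the edges one
pair at a time shows that flipping a single edge `(x, y)` changes `ψ`. By genericity of `G*`
there are infinitely many copies `uᵢ` of `x` and, for every finite `S`, a copy `v` of `y` adjacent
to exactly the `uᵢ` with `i ∈ S`. Hence `ψ(uᵢ; v)`, with the other vertices as parameters, has
the independence property on every finite fragment, and compactness gives it in an elementary
extension.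
-/

section Cuts

variable {α : Type*} [LinearOrder α]

def SameCut (B : Finset α) (x u : α) : Prop :=
  u ∉ B ∧ ∀ y ∈ B, y ≠ x → (y < x ↔ y < u)

theorem SameCut.ite_le_ite_iff {B : Finset α} {x u y z : α} (h : SameCut B x u)
    (hy : y ∈ B) (hz : z ∈ B) :
    (if y = x then u else y) ≤ (if z = x then u else z) ↔ y ≤ z := by
  have hyu : y ≠ u := fun e => h.1 (e ▸ hy)
  have hzu : z ≠ u := fun e => h.1 (e ▸ hz)
  split_ifs with hyx hzx hzx
  · simp [hyx, hzx]
  · have := h.2 z hz hzx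
    subst hyx
    rw [← not_lt, ← not_lt, not_iff_not]
    exact this.symm
  · have := h.2 y hy hyx
    subst hzx
    rw [le_iff_lt_or_eq, le_iff_lt_or_eq]
    simp [hyx, hyu, this]
  · rfl

theorem DenseUnbounded.infinite_inter_sameCut {S : Set α} (hS : DenseUnbounded S)
    (B : Finset α) (x : α) : (S ∩ {u | SameCut B x u}).Infinite := by
  set C := S ∩ {z | x < z ∧ ∀ y ∈ B, x < y → z < y}
  have hC : C ⊆ S ∩ {u | SameCut B x u} := by
    rintro z ⟨hzS, hxz, hzB⟩
    refine ⟨hzS, fun hz => lt_irrefl z (hzB z hz hxz), fun y hy hyx => ⟨fun h => h.trans hxz, ?_⟩⟩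
    intro hyz
    by_contra hxy
    exact lt_asymm hyz (hzB y hy (lt_of_le_of_ne (not_lt.mp hxy) hyx.symm))
  have hdown : ∀ z ∈ C, ∃ w ∈ C, w < z := by
    rintro z ⟨-, hxz, hzB⟩
    obtain ⟨w, hwS, hxw, hwz⟩ := hS.1 x z hxz
    exact ⟨w, ⟨hwS, hxw, fun y hy hxy => hwz.trans (hzB y hy hxy)⟩, hwz⟩
  have hne : C.Nonempty := by
    obtain ⟨w, -, hxw⟩ := hS.2.2 x
    set B' := insert w (B.filter (x < ·))
    have hm : x < B'.min' (Finset.insert_nonempty _ _) := by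
      rw [Finset.lt_min'_iff]
      intro y hy
      rcases Finset.mem_insert.mp hy with rfl | hy
      · exact hxw
      · exact (Finset.mem_filter.mp hy).2
    obtain ⟨z, hzS, hxz, hzm⟩ := hS.1 _ _ hm
    refine ⟨z, hzS, hxz, fun y hy hxy => hzm.trans_le (Finset.min'_le _ _ ?_)⟩
    exact Finset.mem_insert_of_mem (Finset.mem_filter.mpr ⟨hy, hxy⟩)
  refine Set.Infinite.mono hC fun hfin => ?_
  obtain ⟨z, hz, hmin⟩ := Set.exists_min_image C id hfin hne
  obtain ⟨w, hw, hwz⟩ := hdown z hz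
  exact not_le.mpr hwz (hmin w hw)

end Cuts

section RandomOBG

variable {α β : Type*} [LinearOrder α] [LinearOrder β] {R : α → β → Prop}

theorem IsRandomOBG.swap (hR : IsRandomOBG R) : IsRandomOBG (fun y x => R x y) :=
  ⟨hR.2.1, hR.1, hR.2.2.2.1, hR.2.2.1, hR.2.2.2.2.2, hR.2.2.2.2.1⟩

theorem IsRandomOBG.denseUnbounded_left (hR : IsRandomOBG R) (B : Finset β) (d : β → Prop) :
    DenseUnbounded {x | ∀ y ∈ B, R x y ↔ d y} := by
  classical
  have h := hR.2.2.2.2.1 (B.filter d) (B.filter (¬d ·)) (Finset.disjoint_filter_filter_not _ _ _)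
  convert h using 3 with x
  simp only [Finset.mem_filter, and_imp]
  exact ⟨fun h => ⟨fun y hy hd => (h y hy).mpr hd, fun y hy hd hr => hd ((h y hy).mp hr)⟩,
    fun h y hy => ⟨fun hr => by_contra fun hd => h.2 y hy hd hr, h.1 y hy⟩⟩

theorem IsRandomOBG.denseUnbounded_right (hR : IsRandomOBG R) (B : Finset α) (d : α → Prop) :
    DenseUnbounded {y | ∀ x ∈ B, R x y ↔ d x} :=
  hR.swap.denseUnbounded_left B d

theorem IsRandomOBG.exists_twins_left (hR : IsRandomOBG R) (A : Finset α) (B : Finset β)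
    (x : α) : ∃ u : ℕ → α, Function.Injective u ∧
      ∀ i, SameCut A x (u i) ∧ ∀ y ∈ B, R (u i) y ↔ R x y := by
  have hinf := (hR.denseUnbounded_left B (R x)).infinite_inter_sameCut A x
  exact ⟨fun i => hinf.natEmbedding _ i, fun i j h => hinf.natEmbedding _ |>.injective
    (Subtype.ext h), fun i => ⟨(hinf.natEmbedding _ i).2.2, (hinf.natEmbedding _ i).2.1⟩⟩

theorem IsRandomOBG.exists_twin_right (hR : IsRandomOBG R) (A : Finset α) (B : Finset β)
    (y : β) {W : Finset α} (hW : Disjoint A W) (d : α → Prop) :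
    ∃ v, SameCut B y v ∧ (∀ x ∈ A, R x v ↔ R x y) ∧ ∀ x ∈ W, R x v ↔ d x := by
  obtain ⟨v, hvR, hvcut⟩ := ((hR.denseUnbounded_right (A ∪ W)
    fun x => if x ∈ A then R x y else d x).infinite_inter_sameCut B y).nonempty
  refine ⟨v, hvcut, fun x hx => ?_, fun x hx => ?_⟩
  · simpa [hx] using hvR x (Finset.mem_union_left _ hx)
  · simpa [Finset.disjoint_right.mp hW hx] using hvR x (Finset.mem_union_right _ hx)

end RandomOBG

def FirstOrder.Language.ElementaryEmbedding.ofRealizeDiagram {L : FirstOrder.Language}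
    {M N : Type*} [L.Structure M] [L.Structure N] (f : M → N)
    (hf : ∀ φ : L.Formula M, φ.Realize id → φ.Realize f) : M ↪ₑ[L] N where
  toFun := f
  map_formula' {n} φ x := by
    by_cases h : φ.Realize x
    · have := hf (φ.relabel x) (by simpa [Formula.realize_relabel] using h)
      simp only [Formula.realize_relabel] at this
      exact iff_of_true this h
    · have := hf (φ.relabel x).not (by simpa [Formula.realize_relabel] using h)
      simp only [Formula.realize_not, Formula.realize_relabel] at this
      exact iff_of_false this h

section Compactness

variable {L : FirstOrder.Language.{u, v}} {M : Type (max u v)} [L.Structure M]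

theorem exists_elemExt_realize [Nonempty M] {X : Type} {ι : Type*}
    (Φ : ι → L.Formula (X ⊕ M))
    (hΦ : ∀ s : Finset ι, ∃ x : X → M, ∀ i ∈ s, (Φ i).Realize (Sum.elim x id)) :
    ∃ (N : ElemExt L M) (x : X → N.carrier), ∀ i, (Φ i).Realize (Sum.elim x N.emb) := by
  classical
  let σ : {φ : L.Formula M // φ.Realize id} ⊕ ι → L[[X ⊕ M]].Sentence :=
    Sum.elim (fun φ => Formula.equivSentence (φ.1.relabel Sum.inr))
      (fun i => Formula.equivSentence (Φ i))
  obtain ⟨N⟩ : Theory.IsSatisfiable (Set.range σ) := by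
    rw [Theory.isSatisfiable_iff_isFinitelySatisfiable]
    intro T0 hT0
    obtain ⟨s, -, rfl⟩ := Finset.subset_set_image_iff.mp (Set.image_univ.symm ▸ hT0)
    obtain ⟨x, hx⟩ := hΦ s.toRight
    let : (constantsOn (X ⊕ M)).Structure M := constantsOn.structure (Sum.elim x id)
    suffices M ⊨ ((s.image σ : Finset _) : L[[X ⊕ M]].Theory) from Theory.Model.isSatisfiable M
    refine (Theory.model_iff _).mpr ?_
    simp only [Finset.coe_image, Set.mem_image, Finset.mem_coe, forall_exists_index, and_imp,
      forall_apply_eq_imp_iff₂]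
    rintro (φ | i) hi
    · simp only [σ, Sum.elim_inl, Formula.realize_equivSentence, Formula.realize_relabel]
      exact φ.2
    · simp only [σ, Sum.elim_inr, Formula.realize_equivSentence]
      exact hx i (Finset.mem_toRight.mpr hi)
  let : L.Structure N := (L.lhomWithConstants (X ⊕ M)).reduct N
  let c : X ⊕ M → N := fun z => (L.con z : N)
  have hσ : ∀ j, N ⊨ σ j := fun j => Theory.realize_sentence_of_mem _ (Set.mem_range_self j)
  have hdiag : ∀ φ : L.Formula M, φ.Realize id → φ.Realize (c ∘ Sum.inr) := fun φ hφ => by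
    simpa [σ, Formula.realize_relabel] using hσ (Sum.inl ⟨φ, hφ⟩)
  refine ⟨⟨N, .ofRealizeDiagram _ hdiag⟩, c ∘ Sum.inl, fun i => ?_⟩
  have := hσ (Sum.inr i)
  simp only [σ, Sum.elim_inr, Formula.realize_equivSentence] at this
  convert this using 2 with z
  cases z <;> rfl

theorem hasIPWithParams_of_forall_finite [Nonempty M] {α β : Type} {γ : Type*}
    {φ : L.Formula ((α ⊕ β) ⊕ γ)} {c : γ → M}
    (h : ∀ N : ℕ, ∃ a : ℕ → α → M, ∀ S : Set ℕ, ∃ b : β → M,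
      ∀ i < N, φ.Realize (Sum.elim (Sum.elim (a i) b) c) ↔ i ∈ S) :
    HasIPWithParams φ c := by
  classical
  let var : ℕ × Set ℕ → (α ⊕ β) ⊕ γ → ((ℕ × α) ⊕ (Set ℕ × β)) ⊕ M := fun p =>
    Sum.elim (Sum.elim (fun w => .inl (.inl (p.1, w))) (fun w => .inl (.inr (p.2, w))))
      (fun g => .inr (c g))
  let Φ : ℕ × Set ℕ → L.Formula (((ℕ × α) ⊕ (Set ℕ × β)) ⊕ M) := fun p =>
    if p.1 ∈ p.2 then φ.relabel (var p) else (φ.relabel (var p)).not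
  have realize_Φ : ∀ {P : Type (max u v)} [L.Structure P] (p : ℕ × Set ℕ)
      (x : (ℕ × α) ⊕ (Set ℕ × β) → P) (m : M → P),
      (Φ p).Realize (Sum.elim x m) ↔
        (φ.Realize (Sum.elim (Sum.elim (fun w => x (.inl (p.1, w)))
          (fun w => x (.inr (p.2, w)))) (m ∘ c)) ↔ p.1 ∈ p.2) := by
    intro P _ p x m
    have hv : Sum.elim x m ∘ var p = Sum.elim (Sum.elim (fun w => x (.inl (p.1, w)))
        (fun w => x (.inr (p.2, w)))) (m ∘ c) := by
      ext ((w | w) | g) <;> rfl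
    by_cases hp : p.1 ∈ p.2 <;> simp [Φ, hp, Formula.realize_relabel, hv]
  obtain ⟨N, x, hx⟩ := exists_elemExt_realize Φ fun s => by
    obtain ⟨a, ha⟩ := h (s.sup fun p => p.1 + 1)
    choose b hb using ha
    refine ⟨Sum.elim (fun p => a p.1 p.2) (fun p => b p.1 p.2), fun p hp => ?_⟩
    rw [realize_Φ]
    exact hb p.2 p.1 (Nat.lt_of_succ_le (Finset.le_sup (f := fun p => p.1 + 1) hp))
  exact ⟨N, fun i w => x (.inl (i, w)), fun S w => x (.inr (S, w)), fun i S =>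
    (realize_Φ (i, S) x N.emb).mp (hx (i, S))⟩

theorem HasIPWithParams.relabel_equiv {α β γ γ' : Type*} {φ : L.Formula ((α ⊕ β) ⊕ γ)}
    {c : γ → M} (h : HasIPWithParams φ c) (e : γ ≃ γ') :
    HasIPWithParams (φ.relabel (Sum.map id e)) (c ∘ e.symm) := by
  obtain ⟨N, a, b, hab⟩ := h
  refine ⟨N, a, b, fun i S => ?_⟩
  rw [Formula.realize_relabel, ← hab i S]
  congr! 1
  ext ((w | w) | g) <;> simp

end Compactness

section Hybrid

theorem exists_update_not_iff {P β : Type*} [DecidableEq P] (F : (P → β) → Prop)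
    (D : Finset P) {f g : P → β} (hfg : ∀ p ∉ D, f p = g p) (h : ¬(F f ↔ F g)) :
    ∃ e, ∃ p ∈ D, ∃ y, ¬(F e ↔ F (Function.update e p y)) := by
  induction D using Finset.induction_on generalizing f with
  | empty =>
    obtain rfl : f = g := funext fun p => hfg p (Finset.notMem_empty p)
    exact absurd Iff.rfl h
  | insert p D _ ih =>
    by_cases hp : F f ↔ F (Function.update f p (g p))
    · obtain ⟨e, p', hp', y, he⟩ := ih (f := Function.update f p (g p)) (fun p' hp' => by
        by_cases hpp' : p' = p
        · simp [hpp']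
        · simp [hpp', hfg p' (by simp [hpp', hp'])]) (fun h' => h (hp.trans h'))
      exact ⟨e, p', Finset.mem_insert_of_mem hp', y, he⟩
    · exact ⟨f, p, Finset.mem_insert_self p D, g p, hp⟩

theorem not_iff_true_false_of_not_iff {G : Prop → Prop} {s t : Prop} (h : ¬(G s ↔ G t)) :
    ¬(G True ↔ G False) := by
  intro htf
  have key : ∀ r, G r ↔ G True := fun r => by
    by_cases hr : r
    · rw [eq_true hr]
    · rw [eq_false hr, htf]
  exact h ((key s).trans (key t).symm)

theorem apply_iff_iff_apply_true {G : Prop → Prop} (h : ¬(G True ↔ G False)) (t : Prop) :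
    G t ↔ (t ↔ G True) := by
  by_cases ht : t
  · simp [eq_true ht]
  · rw [eq_false ht]
    tauto

end Hybrid

section Configurations

variable {M : Type*} {da db : ℕ} (a : ℚ → Fin da → M) (b : ℚ → Fin db → M) {ι : Type*}

def mixTuple (s : ι → Bool) (q : ι → ℚ) : ((k : ι) × MixVar da db (s k)) → M :=
  fun v => pickSide (a (q v.1)) (b (q v.1)) (s v.1) v.2

def SameSideOrder (s : ι → Bool) (q q' : ι → ℚ) : Prop :=
  ∀ k l, s k = s l → (q k ≤ q l ↔ q' k ≤ q' l)

def SameEdges (R : ℚ → ℚ → Prop) (s : ι → Bool) (q q' : ι → ℚ) : Prop :=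
  ∀ k l, s k = true → s l = false → (R (q k) (q l) ↔ R (q' k) (q' l))

theorem sameQfType_mkIdx_iff (R : ℚ → ℚ → Prop) {n : ℕ} (s : Fin n → Bool)
    (q q' : Fin n → ℚ) :
    SameQfType R (mkIdx s q) (mkIdx s q') ↔ SameSideOrder s q q' ∧ SameEdges R s q q' := by
  constructor
  · intro h
    refine ⟨fun k l hkl => ?_, fun k l hk hl => ?_⟩
    · have := h k l
      simp only [mkIdx, hkl] at this
      revert this
      cases s l <;> exact fun h => h.1
    · simpa [mkIdx, hk, hl, SamePairType] using h k l
  · rintro ⟨ho, he⟩ k l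
    simp only [mkIdx]
    cases hk : s k <;> cases hl : s l <;> simp only [cond_true, cond_false, SamePairType]
    · exact ⟨ho k l (hk.trans hl.symm), ho l k (hl.trans hk.symm)⟩
    · exact he l k hl hk
    · exact he k l hk hl
    · exact ⟨ho k l (hk.trans hl.symm), ho l k (hl.trans hk.symm)⟩

end Configurations

section GStarIndexed

variable {L : FirstOrder.Language.{u, v}} {M : Type (max u v)} [L.Structure M] {da db : ℕ}
  {a : ℚ → Fin da → M} {b : ℚ → Fin db → M} {ι : Type*}

theorem IsLStarIndiscernible.realize_mixTuple_iff {R : ℚ → ℚ → Prop}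
    (h : IsLStarIndiscernible (L := L) R a b) [Finite ι] {s : ι → Bool} {q q' : ι → ℚ}
    (ho : SameSideOrder s q q') (he : SameEdges R s q q')
    (φ : L.Formula ((k : ι) × MixVar da db (s k))) :
    φ.Realize (mixTuple a b s q) ↔ φ.Realize (mixTuple a b s q') := by
  obtain ⟨n, ⟨e⟩⟩ := Finite.exists_equiv_fin ι
  have transport : ∀ q : ι → ℚ, mixTuple a b (s ∘ e.symm) (q ∘ e.symm) ∘
      Equiv.sigmaCongrLeft' (β := fun k => MixVar da db (s k)) e = mixTuple a b s q := by
    intro q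
    funext x
    exact congrArg (mixTuple a b s q) ((Equiv.sigmaCongrLeft e.symm).apply_symm_apply x)
  rw [← transport q, ← transport q', ← Formula.realize_relabel, ← Formula.realize_relabel]
  refine h n _ _ _ ((sameQfType_mkIdx_iff _ _ _ _).mpr ⟨fun k l hkl => ?_, fun k l hk hl => ?_⟩) _
  · exact ho _ _ hkl
  · exact he _ _ hk hl

theorem IsLStarIndiscernible.isIndiscernibleOver_side
    (h : IsLStarIndiscernible (L := L) (fun _ _ => True) a b) (t : Bool) :
    IsIndiscernibleOver (L := L) (fun r => pickSide (a r) (b r) t)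
      (⋃ r, Set.range (pickSide (a r) (b r) (!t))) := by
  intro n m i j hi hj p hp φ
  simp only [Set.mem_iUnion, Set.mem_range] at hp
  choose r w hrw using hp
  let s : Fin n ⊕ Fin m → Bool := Sum.elim (fun _ => t) (fun _ => !t)
  let g : Fin n × MixVar da db t ⊕ Fin m → (k : Fin n ⊕ Fin m) × MixVar da db (s k) :=
    Sum.elim (fun v => ⟨.inl v.1, v.2⟩) (fun l => ⟨.inr l, w l⟩)
  have hg : ∀ i : Fin n → ℚ, mixTuple a b s (Sum.elim i r) ∘ g =
      Sum.elim (fun v => pickSide (a (i v.1)) (b (i v.1)) t v.2) p := by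
    intro i
    funext v
    rcases v with v | l
    · rfl
    · exact hrw l
  rw [← hg i, ← hg j, ← Formula.realize_relabel, ← Formula.realize_relabel]
  refine h.realize_mixTuple_iff ?_ (fun _ _ _ _ => Iff.rfl) _
  rintro (k | k) (l | l) hkl
  · simp [hi.le_iff_le, hj.le_iff_le]
  · cases t <;> simp [s] at hkl
  · cases t <;> simp [s] at hkl
  · rfl

theorem IsLStarIndiscernible.mutuallyIndiscernible
    (h : IsLStarIndiscernible (L := L) (fun _ _ => True) a b) :
    MutuallyIndiscernible (L := L) a b :=
  ⟨h.isIndiscernibleOver_side true, h.isIndiscernibleOver_side false⟩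

end GStarIndexed

section Replacement

variable {ι : Type*} [Fintype ι] (s : ι → Bool)

def sideValues (q : ι → ℚ) (t : Bool) : Finset ℚ :=
  (Finset.univ.filter (s · = t)).image q

theorem mem_sideValues (q : ι → ℚ) (k : ι) : q k ∈ sideValues s q (s k) :=
  Finset.mem_image_of_mem q (Finset.mem_filter.mpr ⟨Finset.mem_univ k, rfl⟩)

def replaceVertices (q : ι → ℚ) (x y u v : ℚ) : ι → ℚ :=
  fun k => if q k = (bif s k then x else y) then (bif s k then u else v) else q k

variable {s}

theorem sameSideOrder_replaceVertices {q : ι → ℚ} {x y u v : ℚ}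
    (hu : SameCut (sideValues s q true) x u) (hv : SameCut (sideValues s q false) y v) :
    SameSideOrder s q (replaceVertices s q x y u v) := by
  intro k l hkl
  have hk := mem_sideValues s q k
  have hl := mem_sideValues s q l
  rw [← hkl] at hl
  simp only [replaceVertices, ← hkl]
  cases h : s k
  · rw [h] at hk hl
    exact (hv.ite_le_ite_iff hk hl).symm
  · rw [h] at hk hl
    exact (hu.ite_le_ite_iff hk hl).symm

theorem rel_replaceVertices_iff {R : ℚ → ℚ → Prop} {q : ι → ℚ} {x y u v : ℚ}
    (hu : ∀ y' ∈ sideValues s q false, R u y' ↔ R x y')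
    (hv : ∀ x' ∈ sideValues s q true, R x' v ↔ R x' y) {k l : ι} (hk : s k = true)
    (hl : s l = false) :
    R (replaceVertices s q x y u v k) (replaceVertices s q x y u v l) ↔
      if q k = x ∧ q l = y then R u v else R (q k) (q l) := by
  have hk' := hk ▸ mem_sideValues s q k
  have hl' := hl ▸ mem_sideValues s q l
  simp only [replaceVertices, hk, hl, cond_true, cond_false]
  by_cases hx : q k = x <;> by_cases hy : q l = y <;> simp [hx, hy]
  · exact hx ▸ hu _ hl'
  · exact hy ▸ hv _ hk'

end Replacement

section ReplacementTuples

variable {M : Type*} {da db : ℕ} (a : ℚ → Fin da → M) (b : ℚ → Fin db → M) {ι : Type*}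

instance (t : Bool) : Finite (MixVar da db t) := by
  cases t <;> exact Finite.of_fintype (Fin _)

def toSide : (t : Bool) → MixVar da db t → Fin da ⊕ Fin db
  | true, w => .inl w
  | false, w => .inr w

/-- The variables of the replaced vertices become the free variables `x̄; ȳ`, the others
parameters. -/
def replaceVars (s : ι → Bool) (q : ι → ℚ) (x y : ℚ) :
    ((k : ι) × MixVar da db (s k)) → (Fin da ⊕ Fin db) ⊕ ((k : ι) × MixVar da db (s k)) :=
  fun w => if q w.1 = (bif s w.1 then x else y) then .inl (toSide (s w.1) w.2) else .inr w

theorem mixTuple_replaceVertices (s : ι → Bool) (q : ι → ℚ) (x y u v : ℚ) :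
    mixTuple a b s (replaceVertices s q x y u v) =
      Sum.elim (Sum.elim (a u) (b v)) (mixTuple a b s q) ∘ replaceVars s q x y := by
  funext ⟨k, w⟩
  simp only [Function.comp, mixTuple, replaceVertices, replaceVars]
  split_ifs
  · revert w
    cases s k <;> intro w <;> rfl
  · rfl

theorem mixTuple_mem (s : ι → Bool) (q : ι → ℚ) (w : (k : ι) × MixVar da db (s k)) :
    mixTuple a b s q w ∈ (⋃ i, Set.range (a i)) ∪ ⋃ i, Set.range (b i) := by
  obtain ⟨k, w⟩ := w
  simp only [mixTuple]
  revert w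
  cases s k
  · exact fun w => .inr (Set.mem_iUnion_of_mem _ (Set.mem_range_self w))
  · exact fun w => .inl (Set.mem_iUnion_of_mem _ (Set.mem_range_self w))

end ReplacementTuples

section Patterns

variable {L : FirstOrder.Language.{u, v}} {M : Type (max u v)} [L.Structure M]
  {R : ℚ → ℚ → Prop} {da db : ℕ} {a : ℚ → Fin da → M} {b : ℚ → Fin db → M} {ι : Type*}
  {s : ι → Bool} {q : ι → ℚ}

theorem SameSideOrder.eq_iff_eq {q' : ι → ℚ} (h : SameSideOrder s q q') {k l : ι}
    (hkl : s k = s l) : q' k = q' l ↔ q k = q l := by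
  simp only [le_antisymm_iff, h k l hkl, h l k hkl.symm]

variable (R s q) in
def RealizesPattern (e : ℚ × ℚ → Prop) (q' : ι → ℚ) : Prop :=
  SameSideOrder s q q' ∧ ∀ k l, s k = true → s l = false → (R (q' k) (q' l) ↔ e (q k, q l))

variable (R a b s q) in
def PatternHolds (ψ : L.Formula ((k : ι) × MixVar da db (s k))) (e : ℚ × ℚ → Prop) : Prop :=
  ∃ q', RealizesPattern R s q e q' ∧ ψ.Realize (mixTuple a b s q')

theorem realize_iff_patternHolds (hind : IsLStarIndiscernible (L := L) R a b) [Finite ι]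
    {ψ : L.Formula ((k : ι) × MixVar da db (s k))} {e : ℚ × ℚ → Prop} {q' : ι → ℚ}
    (hq' : RealizesPattern R s q e q') :
    ψ.Realize (mixTuple a b s q') ↔ PatternHolds R a b s q ψ e := by
  refine ⟨fun h => ⟨q', hq', h⟩, fun ⟨q'', hq'', h⟩ => ?_⟩
  refine (hind.realize_mixTuple_iff (fun k l hkl => ?_) (fun k l hk hl => ?_) ψ).mpr h
  · exact (hq'.1 k l hkl).symm.trans (hq''.1 k l hkl)
  · exact (hq'.2 k l hk hl).trans (hq''.2 k l hk hl).symm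

theorem RealizesPattern.replaceVertices [Fintype ι] {e : ℚ × ℚ → Prop} {t : Prop}
    {qb : ι → ℚ} {k₀ l₀ : ι} (hqb : RealizesPattern R s q (Function.update e (q k₀, q l₀) t) qb)
    (hk₀ : s k₀ = true) (hl₀ : s l₀ = false) {u v : ℚ}
    (hu : SameCut (sideValues s qb true) (qb k₀) u)
    (hu' : ∀ y ∈ sideValues s qb false, R u y ↔ R (qb k₀) y)
    (hv : SameCut (sideValues s qb false) (qb l₀) v)
    (hv' : ∀ x ∈ sideValues s qb true, R x v ↔ R x (qb l₀)) :
    RealizesPattern R s q (Function.update e (q k₀, q l₀) (R u v))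
      (replaceVertices s qb (qb k₀) (qb l₀) u v) := by
  refine ⟨fun k l hkl => (hqb.1 k l hkl).trans (sameSideOrder_replaceVertices hu hv k l hkl),
    fun k l hk hl => ?_⟩
  have hpair : (qb k = qb k₀ ∧ qb l = qb l₀) ↔ (q k, q l) = (q k₀, q l₀) := by
    rw [Prod.mk.injEq, hqb.1.eq_iff_eq (hk.trans hk₀.symm), hqb.1.eq_iff_eq (hl.trans hl₀.symm)]
  rw [rel_replaceVertices_iff hu' hv' hk hl]
  by_cases hp : (q k, q l) = (q k₀, q l₀)
  · rw [if_pos (hpair.mpr hp), hp, Function.update_self]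
  · rw [if_neg (mt hpair.mp hp), Function.update_of_ne hp, hqb.2 k l hk hl,
      Function.update_of_ne hp]

end Patterns

section IndependenceProperty

variable {L : FirstOrder.Language.{u, v}} {M : Type (max u v)} [L.Structure M]
  {R : ℚ → ℚ → Prop} {da db : ℕ} {a : ℚ → Fin da → M} {b : ℚ → Fin db → M} {ι : Type*}
  [Fintype ι] {s : ι → Bool} {q : ι → ℚ} {ψ : L.Formula ((k : ι) × MixVar da db (s k))}

theorem exists_flip_of_not_iff (hind : IsLStarIndiscernible (L := L) R a b) {q' : ι → ℚ}
    (hord : SameSideOrder s q q')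
    (hne : ¬(ψ.Realize (mixTuple a b s q) ↔ ψ.Realize (mixTuple a b s q'))) :
    ∃ e k₀ l₀, s k₀ = true ∧ s l₀ = false ∧
      ¬(PatternHolds R a b s q ψ (Function.update e (q k₀, q l₀) True) ↔
        PatternHolds R a b s q ψ (Function.update e (q k₀, q l₀) False)) := by
  let D : Finset (ℚ × ℚ) := (Finset.univ.filter fun kl : ι × ι =>
    s kl.1 = true ∧ s kl.2 = false).image fun kl => (q kl.1, q kl.2)
  let eR : ℚ × ℚ → Prop := fun p => R p.1 p.2
  let e' : ℚ × ℚ → Prop := fun p =>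
    ∃ k l, s k = true ∧ s l = false ∧ (q k, q l) = p ∧ R (q' k) (q' l)
  have hq : RealizesPattern R s q eR q := ⟨fun _ _ _ => Iff.rfl, fun _ _ _ _ => Iff.rfl⟩
  have hq' : RealizesPattern R s q (D.piecewise e' eR) q' := by
    refine ⟨hord, fun k l hk hl => ?_⟩
    rw [Finset.piecewise_eq_of_mem _ _ _
      (Finset.mem_image_of_mem _ (Finset.mem_filter.mpr ⟨Finset.mem_univ (k, l), hk, hl⟩))]
    refine ⟨fun h => ⟨k, l, hk, hl, rfl, h⟩, ?_⟩
    rintro ⟨k', l', hk', hl', hkl, h⟩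
    obtain ⟨hkk, hll⟩ := Prod.mk.inj hkl
    rwa [(hord.eq_iff_eq (hk'.trans hk.symm)).mpr hkk,
      (hord.eq_iff_eq (hl'.trans hl.symm)).mpr hll] at h
  obtain ⟨e, p, hp, y, he⟩ := exists_update_not_iff (PatternHolds R a b s q ψ) D
    (fun p hp => (D.piecewise_eq_of_notMem _ _ hp).symm)
    (by rwa [← realize_iff_patternHolds hind hq, ← realize_iff_patternHolds hind hq'])
  obtain ⟨⟨k₀, l₀⟩, hkl, rfl⟩ := Finset.mem_image.mp hp
  obtain ⟨hk₀, hl₀⟩ := (Finset.mem_filter.mp hkl).2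
  refine ⟨e, k₀, l₀, hk₀, hl₀, not_iff_true_false_of_not_iff (s := e (q k₀, q l₀)) (t := y)
    (G := fun t => PatternHolds R a b s q ψ (Function.update e (q k₀, q l₀) t)) ?_⟩
  simpa only [Function.update_eq_self] using he

theorem hasIPWithParams_of_flip (hR : IsRandomOBG R) (hind : IsLStarIndiscernible (L := L) R a b)
    [Nonempty M] {e : ℚ × ℚ → Prop} {k₀ l₀ : ι} (hk₀ : s k₀ = true) (hl₀ : s l₀ = false)
    (hflip : ¬(PatternHolds R a b s q ψ (Function.update e (q k₀, q l₀) True) ↔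
      PatternHolds R a b s q ψ (Function.update e (q k₀, q l₀) False))) :
    ∃ qb, HasIPWithParams (ψ.relabel (replaceVars s qb (qb k₀) (qb l₀))) (mixTuple a b s qb) := by
  set G := fun t => PatternHolds R a b s q ψ (Function.update e (q k₀, q l₀) t)
  obtain ⟨t, qb, hqb, -⟩ : ∃ t, G t := by
    by_contra! h
    exact hflip (iff_of_false (h True) (h False))
  obtain ⟨u, hu_inj, hu⟩ :=
    hR.exists_twins_left (sideValues s qb true) (sideValues s qb false) (qb k₀)
  refine ⟨qb, hasIPWithParams_of_forall_finite fun N => ⟨fun i => a (u i), fun S => ?_⟩⟩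
  obtain ⟨v, hv, hv', hvu⟩ := hR.exists_twin_right (sideValues s qb true)
    (sideValues s qb false) (qb l₀) (W := (Finset.range N).image u)
    (Finset.disjoint_right.mpr fun x hx => by
      obtain ⟨i, -, rfl⟩ := Finset.mem_image.mp hx
      exact (hu i).1.1)
    -- whatever the polarity `G True`, this makes `ψ(uᵢ; v)` hold exactly for `i ∈ S`
    (· ∈ u '' {i | i ∈ S ↔ G True})
  refine ⟨b v, fun i hi => ?_⟩
  have hreal := hqb.replaceVertices hk₀ hl₀ (hu i).1 (hu i).2 hv hv'
  calc _ ↔ ψ.Realize (mixTuple a b s (replaceVertices s qb (qb k₀) (qb l₀) (u i) v)) := by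
        rw [Formula.realize_relabel, mixTuple_replaceVertices]
    _ ↔ G (R (u i) v) := realize_iff_patternHolds hind hreal
    _ ↔ (R (u i) v ↔ G True) := apply_iff_iff_apply_true hflip _
    _ ↔ i ∈ S := by
        rw [hvu _ (Finset.mem_image_of_mem u (Finset.mem_range.mpr hi)), hu_inj.mem_set_image,
          Set.mem_ofPred_eq]
        tauto

theorem exists_hasIPWithParams_of_not_isLStarIndiscernible [Nonempty M] (hR : IsRandomOBG R)
    (hind : IsLStarIndiscernible (L := L) R a b)
    (h : ¬IsLStarIndiscernible (L := L) (fun _ _ => True) a b) :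
    ∃ (k : ℕ) (ψ : L.Formula ((Fin da ⊕ Fin db) ⊕ Fin k)) (c : Fin k → M),
      (∀ l, c l ∈ (⋃ i, Set.range (a i)) ∪ ⋃ i, Set.range (b i)) ∧ HasIPWithParams ψ c := by
  simp only [IsLStarIndiscernible, not_forall] at h
  obtain ⟨n, s, q, q', hsame, ψ, hne⟩ := h
  obtain ⟨e, k₀, l₀, hk₀, hl₀, hflip⟩ :=
    exists_flip_of_not_iff hind ((sameQfType_mkIdx_iff _ _ _ _).mp hsame).1 hne
  obtain ⟨qb, hIP⟩ := hasIPWithParams_of_flip hR hind hk₀ hl₀ hflip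
  obtain ⟨K, ⟨enc⟩⟩ := Finite.exists_equiv_fin ((k : Fin n) × MixVar da db (s k))
  exact ⟨K, _, _, fun l => mixTuple_mem a b s qb _, hIP.relabel_equiv enc⟩

end IndependenceProperty

theorem mutually_indiscernible_or_IP_general {L : FirstOrder.Language.{u, v}}
    (M : Type (max u v)) [L.Structure M] [Nonempty M]
    {da db : ℕ} (a : ℚ → Fin da → M) (b : ℚ → Fin db → M)
    (R : ℚ → ℚ → Prop) (hR : IsRandomOBG R)
    (hind : IsLStarIndiscernible (L := L) R a b) :
    MutuallyIndiscernible (L := L) a b ∨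
      ∃ (k : ℕ) (ψ : L.Formula ((Fin da ⊕ Fin db) ⊕ Fin k)) (c : Fin k → M),
        (∀ l, c l ∈ (⋃ i, Set.range (a i)) ∪ ⋃ i, Set.range (b i)) ∧
          HasIPWithParams ψ c := by
  by_cases h : IsLStarIndiscernible (L := L) (fun _ _ => True) a b
  · exact .inl h.mutuallyIndiscernible
  · exact .inr (exists_hasIPWithParams_of_not_isLStarIndiscernible hR hind h)

/-- Lemma 2: If `(āᵢ, b̄ᵢ : i ∈ ℚ)` is `L*`-indiscernible (indexed by the random
ordered bipartite graph `G*`), then either the two sequences `(āᵢ)` and `(b̄ᵢ)` are mutually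
indiscernible, or some formula `φ(x̄; ȳ)` with `|x̄| = |āᵢ|`, `|ȳ| = |b̄ᵢ|` and parameters
from `{āᵢ, b̄ᵢ : i ∈ ℚ}` has the independence property. -/
theorem mutually_indiscernible_or_IP {L : FirstOrder.Language.{u, v}} (T : L.Theory)
    (hT : T.IsComplete) (M : Type (max u v)) [L.Structure M] [Nonempty M] (hM : M ⊨ T)
    {da db : ℕ} (a : ℚ → Fin da → M) (b : ℚ → Fin db → M)
    (R : ℚ → ℚ → Prop) (hR : IsRandomOBG R)
    (hind : IsLStarIndiscernible (L := L) R a b) :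
    MutuallyIndiscernible (L := L) a b ∨
      ∃ (k : ℕ) (ψ : L.Formula ((Fin da ⊕ Fin db) ⊕ Fin k)) (c : Fin k → M),
        (∀ l, c l ∈ (⋃ i, Set.range (a i)) ∪ ⋃ i, Set.range (b i)) ∧
          HasIPWithParams ψ c :=
  mutually_indiscernible_or_IP_general M a b R hR hind
end

section
/- Let (ℚ; <, R_φ) be a model of the theory of the random ordered graph (the Fraïssé limit of finite ordered graphs), where R_φ is a symmetric irreflexive binary relation on ℚ. Then there exist subsets I, J ⊆ ℚ with I < J (every element of I is less than every element of J), each of order type ℚ, such that I and J are antichains for R_φ (no R_φ-edges within I or within J), and the ordered bipartite graph (I, <; J, <; R_φ ∩ (I × J)) is isomorphic to the random ordered bipartite graph G*. -/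
open FirstOrder FirstOrder.Language

universe u v

/-!
`I ⊆ (-∞, 0)` and `J ⊆ (0, ∞)` are built as unions of finite stages. Enumerate all requirements
"an element of `I` (resp. `J`) in the interval `(u, v)` adjacent to every point of a finite `F`
and to none of a finite `G`". At stage `n` the `n`-th requirement is met, when possible, by a
point that is moreover non-adjacent to everything already placed on its side; the extension
property of the random ordered graph supplies such a point whenever `F` lies on the other side.
So both parts stay antichains, every requirement with `F` on the other side is eventually met,
which is the extension property of `G*`, and Cantor's back-and-forth theorem gives both parts
order type `ℚ`.
-/

section DenseUnbounded

variable {α : Type*} [LinearOrder α]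

theorem DenseUnbounded.nonempty_orderIso_rat [Countable α] [Nonempty α] {S : Set α}
    (hS : DenseUnbounded S) : Nonempty (α ≃o ℚ) := by
  obtain ⟨hdense, hbelow, habove⟩ := hS
  have : DenselyOrdered α := ⟨fun x y hxy => by
    obtain ⟨z, -, hz⟩ := hdense x y hxy
    exact ⟨z, hz⟩⟩
  have : NoMinOrder α := ⟨fun x => by
    obtain ⟨z, -, hz⟩ := hbelow x
    exact ⟨z, hz⟩⟩
  have : NoMaxOrder α := ⟨fun x => by
    obtain ⟨z, -, hz⟩ := habove x
    exact ⟨z, hz⟩⟩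
  exact Order.iso_of_countable_dense α ℚ

theorem denseUnbounded_of_forall_Ioo [TopologicalSpace α] [OrderTopology α] [NoMinOrder α]
    [NoMaxOrder α] {H S : Set α} (hH : IsOpen H) [H.OrdConnected] (hSH : S ⊆ H) {P : S → Prop}
    (hP : ∀ u v, u < v → Set.Ioo u v ⊆ H → ∃ z : S, (z : α) ∈ Set.Ioo u v ∧ P z) :
    DenseUnbounded {z : S | P z} := by
  refine ⟨fun x y hxy => ?_, fun x => ?_, fun x => ?_⟩
  · obtain ⟨z, hz, hPz⟩ := hP x y hxy
      (Set.Ioo_subset_Icc_self.trans (Set.OrdConnected.out ‹_› (hSH x.2) (hSH y.2)))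
    exact ⟨z, hPz, hz⟩
  · obtain ⟨u, hux, huH⟩ := exists_Ioc_subset_of_mem_nhds (hH.mem_nhds (hSH x.2)) (exists_lt _)
    obtain ⟨z, hz, hPz⟩ := hP u x hux (Set.Ioo_subset_Ioc_self.trans huH)
    exact ⟨z, hPz, hz.2⟩
  · obtain ⟨v, hxv, hvH⟩ := exists_Ico_subset_of_mem_nhds (hH.mem_nhds (hSH x.2)) (exists_gt _)
    obtain ⟨z, hz, hPz⟩ := hP x v hxv (Set.Ioo_subset_Ico_self.trans hvH)
    exact ⟨z, hPz, hz.1⟩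

end DenseUnbounded

theorem IsRandomOBG.nonempty_orderIso_rat {α β : Type*} [LinearOrder α] [LinearOrder β]
    {R : α → β → Prop} (hR : IsRandomOBG R) : Nonempty (α ≃o ℚ) ∧ Nonempty (β ≃o ℚ) := by
  obtain ⟨_, _, _, _, hU, hV⟩ := hR
  exact ⟨(hU ∅ ∅ (Finset.disjoint_empty_left ∅)).nonempty_orderIso_rat,
    (hV ∅ ∅ (Finset.disjoint_empty_left ∅)).nonempty_orderIso_rat⟩

namespace RandomOrderedGraph

def half : Bool → Set ℚ
  | true => Set.Iio 0
  | false => Set.Ioi 0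

theorem disjoint_half_not (s : Bool) : Disjoint (half s) (half !s) := by
  cases s
  · exact ((Set.Iic_disjoint_Ioi le_rfl).mono_left Set.Iio_subset_Iic_self).symm
  · exact (Set.Iic_disjoint_Ioi le_rfl).mono_left Set.Iio_subset_Iic_self

theorem isOpen_half (s : Bool) : IsOpen (half s) := by
  cases s
  · exact isOpen_Ioi
  · exact isOpen_Iio

theorem ordConnected_half (s : Bool) : (half s).OrdConnected := by
  cases s
  · exact Set.ordConnected_Ioi
  · exact Set.ordConnected_Iio

theorem exists_Ioo_subset_half (s : Bool) : ∃ u v : ℚ, u < v ∧ Set.Ioo u v ⊆ half s := by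
  cases s
  · exact ⟨0, 1, one_pos, Set.Ioo_subset_Ioi_self⟩
  · exact ⟨-1, 0, neg_one_lt_zero, Set.Ioo_subset_Iio_self⟩

/-- The request to put into the `side` part an element of `(lo, hi)` that is adjacent to all
of `F` and to none of `G`. -/
structure Requirement where
  side : Bool
  F : Finset ℚ
  G : Finset ℚ
  lo : ℚ
  hi : ℚ

instance : Countable Requirement :=
  Function.Injective.countable (f := fun t : Requirement => (t.side, t.F, t.G, t.lo, t.hi))
    (fun a b h => by cases a; cases b; simpa using h)

instance : Nonempty Requirement := ⟨⟨true, ∅, ∅, 0, 0⟩⟩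

noncomputable def requirement : ℕ → Requirement :=
  (exists_surjective_nat Requirement).choose

theorem surjective_requirement : Function.Surjective requirement :=
  (exists_surjective_nat Requirement).choose_spec

variable (R : ℚ → ℚ → Prop)

def ExtensionProperty : Prop :=
  ∀ F G : Finset ℚ, Disjoint F G →
    DenseUnbounded {x : ℚ | x ∉ F ∧ x ∉ G ∧ (∀ f ∈ F, R x f) ∧ ∀ g ∈ G, ¬R x g}

/-- Being non-adjacent to the current `P t.side` is what keeps the parts antichains. -/
def IsWitness (P : Bool → Finset ℚ) (t : Requirement) (z : ℚ) : Prop :=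
  z ∈ Set.Ioo t.lo t.hi ∧ z ∈ half t.side ∧ (∀ f ∈ t.F, R z f) ∧ (∀ g ∈ t.G, ¬R z g) ∧
    ∀ c ∈ P t.side, ¬R z c

open Classical in
noncomputable def extend (t : Requirement) (P : Bool → Finset ℚ) : Bool → Finset ℚ :=
  if h : ∃ z, IsWitness R P t z then Function.update P t.side (insert h.choose (P t.side))
  else P

noncomputable def stage : ℕ → Bool → Finset ℚ
  | 0 => fun _ => ∅
  | n + 1 => extend R (requirement n) (stage n)

def part (s : Bool) : Set ℚ := ⋃ n, (stage R n s : Set ℚ)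

variable {R}

theorem exists_extend_eq_insert {t : Requirement} {P : Bool → Finset ℚ}
    (h : ∃ z, IsWitness R P t z) :
    ∃ z, IsWitness R P t z ∧ extend R t P = Function.update P t.side (insert z (P t.side)) :=
  ⟨h.choose, h.choose_spec, by simp only [extend, dif_pos h]⟩

theorem extend_eq_or_eq_insert (t : Requirement) (P : Bool → Finset ℚ) (s : Bool) :
    extend R t P s = P s ∨
      ∃ z, IsWitness R P t z ∧ t.side = s ∧ extend R t P s = insert z (P s) := by
  by_cases h : ∃ z, IsWitness R P t z
  · obtain ⟨z, hz, hext⟩ := exists_extend_eq_insert h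
    rw [hext, Function.update_apply]
    split_ifs with hs
    · exact Or.inr ⟨z, hz, hs.symm, by rw [hs]⟩
    · exact Or.inl rfl
  · simp only [extend, dif_neg h, true_or]

theorem subset_extend (t : Requirement) (P : Bool → Finset ℚ) (s : Bool) :
    P s ⊆ extend R t P s := by
  rcases extend_eq_or_eq_insert t P s with h | ⟨z, -, -, h⟩ <;> rw [h]
  exact Finset.subset_insert z (P s)

theorem stage_mono (s : Bool) : Monotone fun n => (stage R n s : Set ℚ) :=
  monotone_nat_of_le_succ fun _ => Finset.coe_subset.2 (subset_extend _ _ s)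

theorem stage_subset_part (n : ℕ) (s : Bool) : (stage R n s : Set ℚ) ⊆ part R s :=
  Set.subset_iUnion (fun n => (stage R n s : Set ℚ)) n

theorem stage_subset_half (n : ℕ) (s : Bool) : (stage R n s : Set ℚ) ⊆ half s := by
  induction n generalizing s with
  | zero => simp [stage]
  | succ n ih =>
    rcases extend_eq_or_eq_insert (requirement n) (stage R n) s with h | ⟨z, hz, rfl, h⟩
    · rw [stage, h]
      exact ih _
    · rw [stage, h, Finset.coe_insert]
      exact Set.insert_subset hz.2.1 (ih _)

theorem part_subset_half (s : Bool) : part R s ⊆ half s :=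
  Set.iUnion_subset fun n => stage_subset_half n s

theorem isAntichain_stage [Std.Symm R] (n : ℕ) (s : Bool) :
    IsAntichain R (stage R n s : Set ℚ) := by
  induction n generalizing s with
  | zero => simp [stage, IsAntichain]
  | succ n ih =>
    rcases extend_eq_or_eq_insert (requirement n) (stage R n) s with h | ⟨z, hz, rfl, h⟩
    · rw [stage, h]
      exact ih _
    · rw [stage, h, Finset.coe_insert]
      exact (ih _).insert_of_symm fun c hc _ => hz.2.2.2.2 c hc

theorem isAntichain_part [Std.Symm R] (s : Bool) : IsAntichain R (part R s) :=
  (Set.pairwise_iUnion (stage_mono s).directed_le).2 fun n => isAntichain_stage n s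

theorem exists_mem_part (hgen : ExtensionProperty R) (s : Bool) {F G : Finset ℚ}
    (hFG : Disjoint F G) (hF : (F : Set ℚ) ⊆ half !s) {u v : ℚ} (huv : u < v)
    (huvs : Set.Ioo u v ⊆ half s) :
    ∃ z ∈ part R s, z ∈ Set.Ioo u v ∧ (∀ f ∈ F, R z f) ∧ ∀ g ∈ G, ¬R z g := by
  obtain ⟨n, hn⟩ := surjective_requirement ⟨s, F, G, u, v⟩
  have hFstage : Disjoint F (stage R n s) := by
    rw [← Finset.disjoint_coe]
    exact ((disjoint_half_not s).mono (stage_subset_half n s) hF).symm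
  obtain ⟨z, ⟨-, -, hzF, hzG⟩, hzuv⟩ :=
    (hgen F (G ∪ stage R n s) (Finset.disjoint_union_right.2 ⟨hFG, hFstage⟩)).1 u v huv
  have h : ∃ z, IsWitness R (stage R n) (requirement n) z := by
    rw [hn]
    exact ⟨z, hzuv, huvs hzuv, hzF, fun g hg => hzG g (Finset.mem_union_left _ hg),
      fun c hc => hzG c (Finset.mem_union_right _ hc)⟩
  obtain ⟨w, hw, hext⟩ := exists_extend_eq_insert h
  rw [hn] at hw hext
  have hw_stage : w ∈ stage R (n + 1) s := by
    rw [stage, hn, hext]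
    simp
  exact ⟨w, stage_subset_part _ _ hw_stage, hw.1, hw.2.2.1, hw.2.2.2.1⟩

theorem not_rel_of_mem_part [Std.Symm R] [Std.Irrefl R] {s : Bool} {x y : ℚ}
    (hx : x ∈ part R s) (hy : y ∈ part R s) : ¬R x y := by
  rcases eq_or_ne x y with rfl | hne
  · exact irrefl x
  · exact isAntichain_part s hx hy hne

theorem nonempty_part (hgen : ExtensionProperty R) (s : Bool) : Nonempty (part R s) := by
  obtain ⟨u, v, huv, huvs⟩ := exists_Ioo_subset_half s
  obtain ⟨z, hz, -⟩ := exists_mem_part hgen s (Finset.disjoint_empty_left ∅) (by simp) huv huvs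
  exact ⟨⟨z, hz⟩⟩

theorem denseUnbounded_part (hgen : ExtensionProperty R) (s : Bool) {F G : Finset (part R !s)}
    (hFG : Disjoint F G) :
    DenseUnbounded {z : part R s | (∀ f ∈ F, R z f) ∧ ∀ g ∈ G, ¬R z g} := by
  have := ordConnected_half s
  refine denseUnbounded_of_forall_Ioo (isOpen_half s) (part_subset_half s)
    fun u v huv huvs => ?_
  have hF : ((F.map (Function.Embedding.subtype _) : Finset ℚ) : Set ℚ) ⊆ half !s := by
    rw [Finset.coe_map]
    exact Set.image_subset_iff.2 fun f _ => part_subset_half _ f.2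
  obtain ⟨z, hz, hzuv, hzF, hzG⟩ := exists_mem_part hgen s
    ((Finset.disjoint_map _).2 hFG) hF huv huvs
  exact ⟨⟨z, hz⟩, hzuv, fun f hf => hzF f (Finset.mem_map_of_mem _ hf),
    fun g hg => hzG g (Finset.mem_map_of_mem _ hg)⟩

theorem isRandomOBG_part [Std.Symm R] (hgen : ExtensionProperty R) :
    IsRandomOBG fun (i : part R true) (j : part R false) => R i j := by
  refine ⟨inferInstance, inferInstance, nonempty_part hgen true, nonempty_part hgen false,
    fun F G hFG => denseUnbounded_part hgen true hFG, fun F G hFG => ?_⟩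
  have hset : {y : part R false | (∀ f ∈ F, R f y) ∧ ∀ g ∈ G, ¬R g y} =
      {y : part R false | (∀ f ∈ F, R y f) ∧ ∀ g ∈ G, ¬R y g} := by
    ext y
    simp only [Set.mem_ofPred_eq, Std.Symm.iff (r := R) _ (y : ℚ)]
  exact hset ▸ denseUnbounded_part hgen false hFG

end RandomOrderedGraph

open RandomOrderedGraph in
/-- Let `(ℚ; <, R)` be a model of the theory of the random ordered graph (`R`
symmetric, irreflexive, and generic). Then there are subsets `I < J` of `ℚ`, each of order
type `ℚ`, which are `R`-antichains, such that the induced ordered bipartite graph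
`(I, <; J, <; R ∩ (I × J))` is isomorphic to the random ordered bipartite graph `G*`. -/
theorem exists_bipartite_random_in_random_ordered_graph (R : ℚ → ℚ → Prop)
    (hsymm : Symmetric R) (hirr : Irreflexive R)
    (hgen : ∀ F G : Finset ℚ, Disjoint F G →
      DenseUnbounded {x : ℚ | x ∉ F ∧ x ∉ G ∧ (∀ f ∈ F, R x f) ∧ ∀ g ∈ G, ¬R x g}) :
    ∃ I J : Set ℚ, (∀ i ∈ I, ∀ j ∈ J, i < j) ∧
      Nonempty (I ≃o ℚ) ∧ Nonempty (J ≃o ℚ) ∧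
      (∀ i ∈ I, ∀ i' ∈ I, ¬R i i') ∧ (∀ j ∈ J, ∀ j' ∈ J, ¬R j j') ∧
      IsRandomOBG (fun (i : I) (j : J) => R i j) := by
  have : Std.Symm R := ⟨fun _ _ h => hsymm h⟩
  have : Std.Irrefl R := ⟨hirr⟩
  have hrandom := isRandomOBG_part hgen
  obtain ⟨hI, hJ⟩ := hrandom.nonempty_orderIso_rat
  refine ⟨part R true, part R false, fun i hi j hj => ?_, hI, hJ,
    fun _ hi _ hi' => not_rel_of_mem_part hi hi', fun _ hj _ hj' => not_rel_of_mem_part hj hj',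
    hrandom⟩
  exact (part_subset_half true hi : i < 0).trans (part_subset_half false hj)
end

section
/- Let T be a complete first-order theory, φ(x̄;ȳ) a formula, and (āᵢ, b̄ᵢ : i ∈ ℚ) an indiscernible sequence in a model M of T such that M ⊨ φ(āᵢ; b̄ⱼ) iff i < j. Write b̄₀ = b₀⁰⌢b̄'₀ where b₀⁰ is a single element. If the sequence (āᵢ : i ∈ ℚ \ {0}) is indiscernible over b₀⁰, then the formula ψ(x̄;ȳ') := φ(x̄; b₀⁰, ȳ') (with parameter b₀⁰ and |ȳ'| = |ȳ| − 1) has the order property: for every k ∈ ℚ \ {0} there exists a tuple b̄'ₖ in an elementary extension of M such that for all i ∈ ℚ \ {0} with i ≠ k, φ(āᵢ; b₀⁰, b̄'ₖ) holds iff i < k. -/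
open FirstOrder FirstOrder.Language

universe u v

/-- The variable relabeling realizing `ψ(x̄; ȳ') := φ(x̄; b₀⁰ ⌢ ȳ')`: the first `y`-variable
becomes the (single) parameter variable, the remaining `y`-variables form `ȳ'`. -/
def splitVar (mx ny : ℕ) : (Fin mx ⊕ Fin (ny + 1)) → ((Fin mx ⊕ Fin ny) ⊕ Fin 1) :=
  Sum.elim (fun x => Sum.inl (Sum.inl x))
    (Fin.cases (Sum.inr 0) (fun y => Sum.inl (Sum.inr y)))


/-! Translating the indices by `-k` maps the cut of `(āᵢ : i ≠ 0)` at `k` onto its cut at `0`,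
which `b̄'₀` realizes over `b₀⁰` because `φ(āᵢ; b̄₀)` holds iff `i < 0`. Indiscernibility over
`b₀⁰` carries every finite part of this realization back to the cut at `k`, so by compactness
all cuts are realized simultaneously in one elementary extension of `M`; the tuples `āₙ₊₁` and
`b̄'ₖ` for `k = n + 1/2` then witness the order property of `ψ`. -/

def FirstOrder.Language.Formula.signedBy {L : FirstOrder.Language.{u, v}} {α : Type*}
    (φ : L.Formula α) (P : Prop) [Decidable P] : L.Formula α :=
  if P then φ else φ.not

@[simp]
theorem FirstOrder.Language.Formula.realize_signedBy {L : FirstOrder.Language.{u, v}}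
    {α N : Type*} [L.Structure N] (φ : L.Formula α) (P : Prop) [Decidable P] (v : α → N) :
    (φ.signedBy P).Realize v ↔ (φ.Realize v ↔ P) := by
  by_cases hP : P <;> simp [Formula.signedBy, hP]

theorem realize_relabel_splitVar {L : FirstOrder.Language.{u, v}} {N : Type*} [L.Structure N]
    {mx ny : ℕ} (φ : L.Formula (Fin mx ⊕ Fin (ny + 1))) (x : Fin mx → N) (y : Fin ny → N)
    (z : Fin 1 → N) :
    (φ.relabel (splitVar mx ny)).Realize (Sum.elim (Sum.elim x y) z) ↔
      φ.Realize (Sum.elim x (Fin.cases (z 0) y)) := by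
  rw [Formula.realize_relabel]
  congr!
  ext (i | j)
  · rfl
  · cases j using Fin.cases <;> rfl

section

variable {L : FirstOrder.Language.{u, v}} {M : Type (max u v)} [L.Structure M]

/-- Free variables `Sum.inl m` of a formula over `M ⊕ α` stand for the parameters `m ∈ M`.
The index type `α : Type` keeps the language `L[[M ⊕ α]]`, and so its models, in universe
`max u v`. -/
theorem ElemExt.exists_realize_of_finitely_realized [Nonempty M] {α : Type} {ι : Type*}
    (Φ : ι → L.Formula (M ⊕ α))
    (hΦ : ∀ F : Finset ι, ∃ c : α → M, ∀ j ∈ F, (Φ j).Realize (Sum.elim id c)) :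
    ∃ (N : ElemExt L M) (c : α → N.carrier), ∀ j, (Φ j).Realize (Sum.elim N.emb c) := by
  -- the elementary diagram of `M`
  let D : Set (L.Formula (M ⊕ α)) := {ψ | ∃ φ : L.Formula M, φ.Realize id ∧ ψ = φ.relabel Sum.inl}
  let T : Finset ι → L[[M ⊕ α]].Theory := fun F => Formula.equivSentence '' (D ∪ Φ '' F)
  have hT : Directed (· ⊆ ·) T := Monotone.directed_le fun F G h =>
    Set.image_mono (Set.union_subset_union_right _ (Set.image_mono h))
  have hsat : Theory.IsSatisfiable (⋃ F, T F) := by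
    refine (Theory.isSatisfiable_directed_union_iff hT).2 fun F => ?_
    obtain ⟨c, hc⟩ := hΦ F
    let _ := constantsOn.structure (Sum.elim id c)
    refine @Theory.Model.isSatisfiable _ _ M _ _ ((Theory.model_iff _).2 ?_)
    rintro _ ⟨ψ, hψ, rfl⟩
    rw [Formula.realize_equivSentence]
    rcases hψ with ⟨φ, hφ, rfl⟩ | ⟨j, hj, rfl⟩
    · exact Formula.realize_relabel.2 hφ
    · exact hc j hj
  obtain ⟨N⟩ := hsat
  let _ : L.Structure N := (L.lhomWithConstants (M ⊕ α)).reduct N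
  have hN (F : Finset ι) (ψ) (hψ : ψ ∈ D ∪ Φ '' F) : ψ.Realize fun x => (L.con x : N) :=
    (Formula.realize_equivSentence N ψ).1
      (Theory.realize_sentence_of_mem (⋃ F, T F) (Set.mem_iUnion_of_mem F ⟨ψ, hψ, rfl⟩))
  let f : M → N := fun m => (L.con (Sum.inl m) : L[[M ⊕ α]].Constants)
  have hf : ∀ ⦃n⦄ (φ : L.Formula (Fin n)) (x : Fin n → M), φ.Realize x → φ.Realize (f ∘ x) :=
    fun n φ x h => Formula.realize_relabel.1 (Formula.realize_relabel.1
      (hN ∅ _ (Or.inl ⟨φ.relabel x, Formula.realize_relabel.2 h, rfl⟩)))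
  refine ⟨⟨N, ⟨f, fun n φ x => ⟨fun h => by_contra fun h' => hf φ.not x h' h, hf φ x⟩⟩⟩,
    fun a => (L.con (Sum.inr a) : L[[M ⊕ α]].Constants), fun j => ?_⟩
  convert hN {j} (Φ j) (Or.inr ⟨j, Finset.mem_singleton_self j, rfl⟩) using 1
  ext (m | a) <;> rfl

theorem HasOPWithParams.of_rat_cuts {α β γ : Type*} (φ : L.Formula ((α ⊕ β) ⊕ γ)) (c : γ → M)
    (N : ElemExt L M) (a : ℚ → α → N.carrier) (b : ℚ → β → N.carrier)
    (h : ∀ i k : ℚ, 0 < i → 0 < k → i ≠ k →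
      (φ.Realize (Sum.elim (Sum.elim (a i) (b k)) (N.emb ∘ c)) ↔ i < k)) :
    HasOPWithParams φ c := by
  refine ⟨N, fun i => a (i + 1), fun j => b (j + 1 / 2), fun i j => ?_⟩
  have hne : (i + 1 : ℚ) ≠ j + 1 / 2 := fun hij => by
    have : ((2 * i + 1 : ℕ) : ℚ) = (2 * j : ℕ) := by push_cast; linarith
    have := Nat.cast_injective this
    omega
  rw [h _ _ (by positivity) (by positivity) hne]
  constructor
  · intro hij
    exact_mod_cast (by linarith : (i : ℚ) < j)
  · intro hij
    have : (i + 1 : ℚ) ≤ j := by exact_mod_cast hij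
    linarith

theorem IsIndiscernibleOver.exists_forall_realize {ι γ β : Type*} [LinearOrder ι] [Finite β]
    {c : ι → γ → M} {A : Set M} (hc : IsIndiscernibleOver (L := L) c A) {n m : ℕ}
    {I J : Fin n → ι} (hI : StrictMono I) (hJ : StrictMono J) {p : Fin m → M}
    (hp : ∀ l, p l ∈ A) (ψ : Fin n → L.Formula ((γ ⊕ β) ⊕ Fin m))
    (h : ∃ w : β → M, ∀ l, (ψ l).Realize (Sum.elim (Sum.elim (c (J l)) w) p)) :
    ∃ w : β → M, ∀ l, (ψ l).Realize (Sum.elim (Sum.elim (c (I l)) w) p) := by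
  let θ : L.Formula (Fin n × γ ⊕ Fin m) := Formula.iExs β <| Formula.iInf fun l =>
    (ψ l).relabel (Sum.elim (Sum.elim (fun x => Sum.inl (Sum.inl (l, x))) Sum.inr)
      (Sum.inl ∘ Sum.inr))
  have hθ (K : Fin n → ι) : θ.Realize (Sum.elim (fun v => c (K v.1) v.2) p) ↔
      ∃ w : β → M, ∀ l, (ψ l).Realize (Sum.elim (Sum.elim (c (K l)) w) p) := by
    simp only [θ, Formula.realize_iExs, Formula.realize_iInf, Formula.realize_relabel]
    refine exists_congr fun w => forall_congr' fun l => ?_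
    congr!
    ext ((x | y) | z) <;> rfl
  exact (hθ I).1 ((hc n m J I hJ hI p hp θ).1 ((hθ J).2 h))

theorem IsIndiscernibleOver.exists_realize_iff_lt {G α β : Type*} [AddCommGroup G]
    [LinearOrder G] [IsOrderedAddMonoid G] [Finite β] {a : G → α → M} {p : M}
    (hover : IsIndiscernibleOver (L := L) (fun i : {g : G // g ≠ 0} => a i.1) {p})
    (ψ : L.Formula ((α ⊕ β) ⊕ Fin 1)) {b₀ : β → M}
    (hb₀ : ∀ i, i ≠ 0 → (ψ.Realize (Sum.elim (Sum.elim (a i) b₀) fun _ => p) ↔ i < 0))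
    (k : G) (S : Finset G) (hS : ∀ i ∈ S, i ≠ 0 ∧ i ≠ k) :
    ∃ b : β → M, ∀ i ∈ S, (ψ.Realize (Sum.elim (Sum.elim (a i) b) fun _ => p) ↔ i < k) := by
  let e : Fin S.card ≃o S := S.orderIsoOfFin rfl
  let I : Fin S.card → {g : G // g ≠ 0} := fun l => ⟨e l, (hS _ (e l).2).1⟩
  let J : Fin S.card → {g : G // g ≠ 0} := fun l => ⟨e l - k, sub_ne_zero.2 (hS _ (e l).2).2⟩
  have hI : StrictMono I := fun l l' h => e.strictMono h
  have hJ : StrictMono J := fun l l' h =>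
    sub_lt_sub_right (Subtype.coe_lt_coe.2 (e.strictMono h)) k
  obtain ⟨b, hb⟩ := hover.exists_forall_realize hI hJ (p := fun _ => p) (fun _ => rfl)
    (fun l => ψ.signedBy ((e l : G) < k))
    ⟨b₀, fun l => by simpa [J, sub_neg] using hb₀ _ (J l).2⟩
  refine ⟨b, fun i hi => ?_⟩
  simpa [I] using hb (e.symm ⟨i, hi⟩)

end

section

variable {L : FirstOrder.Language.{u, v}} {M : Type*} {α β : Type*}

def cutFormula (ψ : L.Formula ((α ⊕ β) ⊕ Fin 1)) (a : ℚ → α → M) (p : M) (k i : ℚ) :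
    L.Formula (M ⊕ (ℚ × β)) :=
  (ψ.signedBy (i < k)).relabel
    (Sum.elim (Sum.elim (Sum.inl ∘ a i) fun y => Sum.inr (k, y)) fun _ => Sum.inl p)

theorem realize_cutFormula {N : Type*} [L.Structure N] (ψ : L.Formula ((α ⊕ β) ⊕ Fin 1))
    (a : ℚ → α → M) (p : M) (k i : ℚ) (f : M → N) (c : ℚ × β → N) :
    (cutFormula ψ a p k i).Realize (Sum.elim f c) ↔
      (ψ.Realize (Sum.elim (Sum.elim (f ∘ a i) fun y => c (k, y)) fun _ => f p) ↔ i < k) := by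
  rw [cutFormula, Formula.realize_relabel, Formula.realize_signedBy]
  congr!
  ext ((x | y) | z) <;> rfl

end

theorem IsIndiscernibleOver.exists_realize_cutFormula {L : FirstOrder.Language.{u, v}}
    {M : Type (max u v)} [L.Structure M] {α β : Type*} [Finite β] {a : ℚ → α → M} {p : M}
    (hover : IsIndiscernibleOver (L := L) (fun i : {q : ℚ // q ≠ 0} => a i.1) {p})
    (ψ : L.Formula ((α ⊕ β) ⊕ Fin 1)) {b₀ : β → M}
    (hb₀ : ∀ i, i ≠ 0 → (ψ.Realize (Sum.elim (Sum.elim (a i) b₀) fun _ => p) ↔ i < 0))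
    (F : Finset {q : ℚ × ℚ // q.2 ≠ 0 ∧ q.2 ≠ q.1}) :
    ∃ c : ℚ × β → M, ∀ q ∈ F, (cutFormula ψ a p q.1.1 q.1.2).Realize (Sum.elim id c) := by
  have hcut (k : ℚ) := hover.exists_realize_iff_lt ψ hb₀ k
    ((F.filter fun q => q.1.1 = k).image fun q => q.1.2) (by
      simp only [Finset.mem_image, Finset.mem_filter]
      rintro _ ⟨q, ⟨-, rfl⟩, rfl⟩
      exact q.2)
  choose b hb using hcut
  refine ⟨fun y => b y.1 y.2, fun q hq => (realize_cutFormula ψ a p _ _ id _).2 ?_⟩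
  exact hb _ _ (Finset.mem_image_of_mem _ (Finset.mem_filter.2 ⟨hq, rfl⟩))

theorem order_property_of_indiscernible_over_first_coordinate_general
    {L : FirstOrder.Language.{u, v}}
    (M : Type (max u v)) [L.Structure M]
    {mx ny : ℕ} (φ : L.Formula (Fin mx ⊕ Fin (ny + 1)))
    (a : ℚ → Fin mx → M) (b : ℚ → Fin (ny + 1) → M)
    (hord : ∀ i j : ℚ, φ.Realize (Sum.elim (a i) (b j)) ↔ i < j)
    (hover : IsIndiscernibleOver (L := L) (fun i : {q : ℚ // q ≠ 0} => a i.1) {b 0 0}) :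
    HasOPWithParams (φ.relabel (splitVar mx ny)) (fun _ : Fin 1 => b 0 0) ∧
      ∃ N : ElemExt L M, ∀ k : ℚ, k ≠ 0 → ∃ bk : Fin ny → N.carrier,
        ∀ i : ℚ, i ≠ 0 → i ≠ k →
          (φ.Realize (Sum.elim (fun x => N.emb (a i x)) (Fin.cases (N.emb (b 0 0)) bk)) ↔
            i < k) := by
  have : Nonempty M := ⟨b 0 0⟩
  set ψ := φ.relabel (splitVar mx ny)
  have hb₀ (i : ℚ) (_ : i ≠ 0) :
      ψ.Realize (Sum.elim (Sum.elim (a i) (Fin.tail (b 0))) fun _ => b 0 0) ↔ i < 0 := by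
    rw [realize_relabel_splitVar, ← hord i 0]
    exact Iff.of_eq (congrArg _ (congrArg _ (Fin.cons_self_tail (b 0))))
  obtain ⟨N, c, hc⟩ := ElemExt.exists_realize_of_finitely_realized
    (fun q : {q : ℚ × ℚ // q.2 ≠ 0 ∧ q.2 ≠ q.1} => cutFormula ψ a (b 0 0) q.1.1 q.1.2)
    (hover.exists_realize_cutFormula ψ hb₀)
  have hcut (k i : ℚ) (hi : i ≠ 0) (hik : i ≠ k) :
      ψ.Realize (Sum.elim (Sum.elim (N.emb ∘ a i) fun y => c (k, y)) fun _ => N.emb (b 0 0)) ↔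
        i < k :=
    (realize_cutFormula ψ a _ k i N.emb c).1 (hc ⟨(k, i), hi, hik⟩)
  refine ⟨HasOPWithParams.of_rat_cuts ψ _ N (fun i => N.emb ∘ a i) (fun k y => c (k, y))
      fun i k hi _ hik => hcut k i hi.ne' hik,
    N, fun k _ => ⟨fun y => c (k, y), fun i hi hik => ?_⟩⟩
  rw [← hcut k i hi hik, realize_relabel_splitVar]
  rfl

/-- Given an indiscernible sequence `(āᵢ, b̄ᵢ : i ∈ ℚ)` with `φ(āᵢ; b̄ⱼ)` iff
`i < j`, write `b̄₀ = b₀⁰ ⌢ b̄'₀`. If `(āᵢ : i ∈ ℚ \ {0})` is indiscernible over `b₀⁰`, then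
`ψ(x̄; ȳ') := φ(x̄; b₀⁰, ȳ')` has the order property; indeed for every `k ≠ 0` there is a
tuple `b̄'ₖ` in an elementary extension of `M` such that for all `i ∈ ℚ \ {0}` with `i ≠ k`,
`φ(āᵢ; b₀⁰, b̄'ₖ)` holds iff `i < k`. -/
theorem order_property_of_indiscernible_over_first_coordinate
    {L : FirstOrder.Language.{u, v}} (T : L.Theory) (hT : T.IsComplete)
    (M : Type (max u v)) [L.Structure M] [Nonempty M] (hM : M ⊨ T)
    {mx ny : ℕ} (φ : L.Formula (Fin mx ⊕ Fin (ny + 1)))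
    (a : ℚ → Fin mx → M) (b : ℚ → Fin (ny + 1) → M)
    (hind : IsIndiscernible (L := L) (fun i : ℚ => Sum.elim (a i) (b i)))
    (hord : ∀ i j : ℚ, φ.Realize (Sum.elim (a i) (b j)) ↔ i < j)
    (hover : IsIndiscernibleOver (L := L) (fun i : {q : ℚ // q ≠ 0} => a i.1) {b 0 0}) :
    HasOPWithParams (φ.relabel (splitVar mx ny)) (fun _ : Fin 1 => b 0 0) ∧
      ∃ N : ElemExt L M, ∀ k : ℚ, k ≠ 0 → ∃ bk : Fin ny → N.carrier,
        ∀ i : ℚ, i ≠ 0 → i ≠ k →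
          (φ.Realize (Sum.elim (fun x => N.emb (a i x)) (Fin.cases (N.emb (b 0 0)) bk)) ↔
            i < k) :=
  order_property_of_indiscernible_over_first_coordinate_general M φ a b hord hover
end

section
/- Let T be a complete first-order theory and (aᵢ : i ∈ ℚ) an indiscernible sequence of single elements in a model of T which is not totally indiscernible. Then there exist indices i₀ < ⋯ < i_m < i_* < j_* < j₀ < ⋯ < j_n in ℚ such that, with A₀ = {a_{i₀},…,a_{i_m}, a_{j₀},…,a_{j_n}}, we have tp(a_{i_*}, a_{j_*}/A₀) ≠ tp(a_{j_*}, a_{i_*}/A₀); and for any formula ψ(x,y) with parameters from A₀ lying in the first type but not the second, ψ(x;y) — a formula in two single variables with parameters — has the order property. -/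
open FirstOrder FirstOrder.Language

universe u v

/-!
For a sequence of single elements, indiscernibility says that the type of a finite tuple `a ∘ v`
depends only on the order type of `v`. Since adjacent transpositions generate the symmetric group,
a sequence that is not totally indiscernible has an increasing tuple whose type changes when two
neighbouring entries are swapped. Placing that tuple at integer positions, the swapped entries
`a_{i⋆}, a_{j⋆}` lie in a gap of the remaining parameters `A₀`, so a formula
`ψ ∈ tp(a_{i⋆}, a_{j⋆}/A₀) \ tp(a_{j⋆}, a_{i⋆}/A₀)` satisfies `ψ(a_s, a_t) ↔ s < t` for all
distinct `s, t` in the gap; any increasing sequence in the gap then witnesses the order property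
already in `M`.
-/

namespace FirstOrder.Language.Formula

variable {L : FirstOrder.Language.{u, v}} {M : Type (max u v)} [L.Structure M]

theorem realize_comp_perm_iff_of_adjacent_swap {n : ℕ} {f : Fin (n + 1) → M}
    (hswap : ∀ (k : Fin n) (φ : L.Formula (Fin (n + 1))),
      φ.Realize (f ∘ Equiv.swap k.castSucc k.succ) ↔ φ.Realize f)
    (ρ : Equiv.Perm (Fin (n + 1))) (φ : L.Formula (Fin (n + 1))) :
    φ.Realize (f ∘ ρ) ↔ φ.Realize f := by
  have hρ : ρ ∈ Submonoid.closure (Set.range fun k : Fin n => Equiv.swap k.castSucc k.succ) := by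
    rw [Equiv.Perm.mclosure_swap_castSucc_succ]; trivial
  induction hρ using Submonoid.closure_induction generalizing φ with
  | mem _ h => obtain ⟨k, rfl⟩ := h; exact hswap k φ
  | one => rfl
  | mul ρ₁ ρ₂ _ _ ih₁ ih₂ =>
    calc φ.Realize (f ∘ ⇑(ρ₁ * ρ₂)) ↔ (φ.relabel ρ₂).Realize (f ∘ ρ₁) := by
          rw [realize_relabel]; rfl
      _ ↔ (φ.relabel ρ₂).Realize f := ih₁ _
      _ ↔ φ.Realize f := realize_relabel.trans (ih₂ φ)

end FirstOrder.Language.Formula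

/-- `tp(x, y / A) = tp(y, x / A)`. -/
def PairTypeSymmOver (L : FirstOrder.Language.{u, v}) {M : Type (max u v)} [L.Structure M]
    (x y : M) (A : Set M) : Prop :=
  ∀ (k : ℕ) (ψ : L.Formula ((Fin 1 ⊕ Fin 1) ⊕ Fin k)) (c : Fin k → M), (∀ l, c l ∈ A) →
    (ψ.Realize (Sum.elim (Sum.elim (fun _ => x) (fun _ => y)) c) ↔
      ψ.Realize (Sum.elim (Sum.elim (fun _ => y) (fun _ => x)) c))

namespace IsIndiscernible

variable {L : FirstOrder.Language.{u, v}} {M : Type (max u v)} [L.Structure M]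
  {ι : Type*} [LinearOrder ι] {a : ι → M}

theorem realize_comp_iff_of_strictMono (hind : IsIndiscernible (L := L) fun i (_ : Fin 1) => a i)
    {n : ℕ} {v v' : Fin n → ι} (hv : StrictMono v) (hv' : StrictMono v')
    (φ : L.Formula (Fin n)) : φ.Realize (a ∘ v) ↔ φ.Realize (a ∘ v') := by
  have := hind n 0 v v' hv hv' Fin.elim0 Fin.elim0 (φ.relabel fun l => Sum.inl (l, 0))
  rwa [Formula.realize_relabel, Formula.realize_relabel] at this

theorem realize_comp_iff_of_forall_le_iff
    (hind : IsIndiscernible (L := L) fun i (_ : Fin 1) => a i) {β : Type*} [Finite β]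
    {v v' : β → ι} (hvv' : ∀ x y, v x ≤ v y ↔ v' x ≤ v' y) (φ : L.Formula β) :
    φ.Realize (a ∘ v) ↔ φ.Realize (a ∘ v') := by
  classical
  have := Fintype.ofFinite β
  -- factor `v` as `e ∘ r` through the increasing enumeration `e` of its range, with section `s`
  let e := (Finset.univ.image v).orderEmbOfFin rfl
  have he : Set.range e = Set.range v := by
    rw [Finset.range_orderEmbOfFin, Finset.coe_image, Finset.coe_univ, Set.image_univ]
  choose r hr using fun x => he.ge (Set.mem_range_self x)
  choose s hs using fun m => he.le (Set.mem_range_self m)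
  have hv's : StrictMono (v' ∘ s) := fun m m' h => by
    have : v (s m) < v (s m') := by rw [hs, hs]; exact e.strictMono h
    simpa only [Function.comp_apply, lt_iff_not_ge, hvv'] using this
  have hv'sr : ∀ x, v' (s (r x)) = v' x := fun x => by
    have : v (s (r x)) = v x := by rw [hs, hr]
    exact le_antisymm ((hvv' _ _).1 this.le) ((hvv' _ _).1 this.ge)
  calc φ.Realize (a ∘ v) ↔ (φ.relabel r).Realize (a ∘ e) := by
        rw [Formula.realize_relabel]; simp only [Function.comp_def, hr]
    _ ↔ (φ.relabel r).Realize (a ∘ (v' ∘ s)) :=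
        hind.realize_comp_iff_of_strictMono e.strictMono hv's _
    _ ↔ φ.Realize (a ∘ v') := by
        rw [Formula.realize_relabel]; simp only [Function.comp_def, hv'sr]

theorem exists_adjacent_swap_of_not_isTotallyIndiscernible
    (hind : IsIndiscernible (L := L) fun i (_ : Fin 1) => a i)
    (hnot : ¬ IsTotallyIndiscernible (L := L) fun i (_ : Fin 1) => a i) :
    ∃ (n : ℕ) (w : Fin (n + 1) → ι) (k : Fin n) (φ : L.Formula (Fin (n + 1))), StrictMono w ∧
      ¬ (φ.Realize (a ∘ w ∘ Equiv.swap k.castSucc k.succ) ↔ φ.Realize (a ∘ w)) := by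
  contrapose! hnot
  rintro (_ | n) i j hi hj φ
  · rw [Subsingleton.elim i j]
  have hsorted : ∀ i : Fin (n + 1) → ι, Function.Injective i → StrictMono (i ∘ Tuple.sort i) :=
    fun i hi => (Tuple.monotone_sort i).strictMono_of_injective (hi.comp (Tuple.sort i).injective)
  have hunsort : ∀ i : Fin (n + 1) → ι, Function.Injective i → ∀ ψ : L.Formula (Fin (n + 1)),
      ψ.Realize (a ∘ i) ↔ ψ.Realize (a ∘ (i ∘ Tuple.sort i)) := by
    intro i hi ψ
    have := Formula.realize_comp_perm_iff_of_adjacent_swap (f := a ∘ (i ∘ Tuple.sort i))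
      (fun k ψ => hnot n _ k ψ (hsorted i hi)) (Tuple.sort i)⁻¹ ψ
    rwa [Function.comp_assoc, Function.comp_assoc, ← Equiv.Perm.coe_mul, mul_inv_cancel,
      Equiv.Perm.coe_one, Function.comp_id] at this
  have := (hunsort i hi _).trans <| (hind.realize_comp_iff_of_strictMono (hsorted i hi)
    (hsorted j hj) (φ.relabel Prod.fst)).trans (hunsort j hj _).symm
  rwa [Formula.realize_relabel, Formula.realize_relabel] at this

theorem not_pairTypeSymmOver_of_adjacent_swap
    (hind : IsIndiscernible (L := L) fun i (_ : Fin 1) => a i) {n : ℕ} {w g : Fin (n + 1) → ι}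
    (hw : StrictMono w) (hg : StrictMono g) {k : Fin n} {φ : L.Formula (Fin (n + 1))}
    (hφ : ¬ (φ.Realize (a ∘ w ∘ Equiv.swap k.castSucc k.succ) ↔ φ.Realize (a ∘ w)))
    {I : Set ι} (hI : ∀ l, l ≠ k.castSucc → l ≠ k.succ → g l ∈ I) (hI₀ : I.Nonempty) :
    ¬ PairTypeSymmOver L (a (g k.castSucc)) (a (g k.succ)) (a '' I) := by
  set τ := Equiv.swap k.castSucc k.succ
  have hτ : ∀ x y, (g ∘ τ) x ≤ (g ∘ τ) y ↔ (w ∘ τ) x ≤ (w ∘ τ) y := fun _ _ =>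
    hg.le_iff_le.trans hw.le_iff_le.symm
  rw [← hind.realize_comp_iff_of_forall_le_iff hτ,
    ← hind.realize_comp_iff_of_strictMono hg hw] at hφ
  intro hsymm
  classical
  let ρ : Fin (n + 1) → (Fin 1 ⊕ Fin 1) ⊕ Fin (n + 1) := fun l =>
    if l = k.castSucc then Sum.inl (Sum.inl 0) else if l = k.succ then Sum.inl (Sum.inr 0)
    else Sum.inr l
  -- the parameters at the two swapped positions are never read through `ρ`
  let c : Fin (n + 1) → M := fun l =>
    if l = k.castSucc ∨ l = k.succ then a hI₀.some else a (g l)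
  have hc : ∀ l, c l ∈ a '' I := fun l => by
    by_cases h : l = k.castSucc ∨ l = k.succ
    · simp only [c, if_pos h]; exact Set.mem_image_of_mem a hI₀.some_mem
    · simp only [c, if_neg h]; push Not at h; exact Set.mem_image_of_mem a (hI l h.1 h.2)
  have := hsymm _ (φ.relabel ρ) c hc
  rw [Formula.realize_relabel, Formula.realize_relabel] at this
  refine hφ (Iff.symm ?_)
  convert this using 2 <;> funext l <;> by_cases h₁ : l = k.castSucc <;>
    by_cases h₂ : l = k.succ <;> simp_all [ρ, c, τ, Equiv.swap_apply_of_ne_of_ne]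

theorem realize_pair_iff_of_gap (hind : IsIndiscernible (L := L) fun i (_ : Fin 1) => a i)
    {β : Type*} [Finite β] (ψ : L.Formula ((Fin 1 ⊕ Fin 1) ⊕ β)) {w : β → ι} {lo hi : ι}
    (hw : ∀ l, w l ≤ lo ∨ hi ≤ w l) {s t s' t' : ι} (hs : s ∈ Set.Ioo lo hi)
    (ht : t ∈ Set.Ioo lo hi) (hs' : s' ∈ Set.Ioo lo hi) (ht' : t' ∈ Set.Ioo lo hi)
    (hst : s ≤ t ↔ s' ≤ t') (hts : t ≤ s ↔ t' ≤ s') :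
    ψ.Realize (Sum.elim (Sum.elim (fun _ => a s) (fun _ => a t)) (a ∘ w)) ↔
      ψ.Realize (Sum.elim (Sum.elim (fun _ => a s') (fun _ => a t')) (a ∘ w)) := by
  have hside : ∀ r ∈ Set.Ioo lo hi, ∀ r' ∈ Set.Ioo lo hi, ∀ l,
      (r ≤ w l ↔ r' ≤ w l) ∧ (w l ≤ r ↔ w l ≤ r') := by
    rintro r ⟨hr, hr'⟩ r' ⟨hr'', hr'''⟩ l
    rcases hw l with h | h
    · exact ⟨iff_of_false (by order) (by order), iff_of_true (by order) (by order)⟩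
    · exact ⟨iff_of_true (by order) (by order), iff_of_false (by order) (by order)⟩
  have := hind.realize_comp_iff_of_forall_le_iff
    (v := Sum.elim (Sum.elim (fun _ => s) (fun _ => t)) w)
    (v' := Sum.elim (Sum.elim (fun _ => s') (fun _ => t')) w) ?_ ψ
  · simp only [Sum.comp_elim] at this
    exact this
  rintro ((_ | _) | x) ((_ | _) | y) <;> simp only [Sum.elim_inl, Sum.elim_inr, le_refl, hst, hts,
    (hside _ hs _ hs' _).1, (hside _ hs _ hs' _).2, (hside _ ht _ ht' _).1, (hside _ ht _ ht' _).2]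

theorem hasOPWithParams_of_gap [DenselyOrdered ι]
    (hind : IsIndiscernible (L := L) fun i (_ : Fin 1) => a i) {k : ℕ}
    (ψ : L.Formula ((Fin 1 ⊕ Fin 1) ⊕ Fin k)) {c : Fin k → M} {I : Set ι} {lo hi s t : ι}
    (hI : I ⊆ Set.Iic lo ∪ Set.Ici hi) (hc : ∀ l, c l ∈ a '' I)
    (hs : lo < s) (hst : s < t) (ht : t < hi)
    (hψ : ψ.Realize (Sum.elim (Sum.elim (fun _ => a s) (fun _ => a t)) c))
    (hψ' : ¬ ψ.Realize (Sum.elim (Sum.elim (fun _ => a t) (fun _ => a s)) c)) :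
    HasOPWithParams ψ c := by
  choose w hwI hwc using hc
  have hw : ∀ l, w l ≤ lo ∨ hi ≤ w l := fun l => hI (hwI l)
  obtain rfl : a ∘ w = c := funext hwc
  have hs' : s ∈ Set.Ioo lo hi := ⟨hs, hst.trans ht⟩
  have ht' : t ∈ Set.Ioo lo hi := ⟨hs.trans hst, ht⟩
  have : Nonempty (Set.Ioo lo hi) := ⟨⟨s, hs'⟩⟩
  obtain ⟨x, hx⟩ := Nat.exists_strictMono (Set.Ioo lo hi)
  refine ⟨⟨M, ElementaryEmbedding.refl L M⟩, fun i _ => a (x (2 * i + 1)),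
    fun j _ => a (x (2 * j)), fun i j => ?_⟩
  change ψ.Realize (Sum.elim (Sum.elim (fun _ => a (x (2 * i + 1))) (fun _ => a (x (2 * j))))
    (a ∘ w)) ↔ i < j
  rcases lt_or_ge i j with hij | hji
  · have hlt : (x (2 * i + 1) : ι) < x (2 * j) := hx (by omega)
    exact iff_of_true ((hind.realize_pair_iff_of_gap ψ hw (x _).2 (x _).2 hs' ht'
      (iff_of_true hlt.le hst.le) (iff_of_false hlt.not_ge hst.not_ge)).2 hψ) hij
  · have hlt : (x (2 * j) : ι) < x (2 * i + 1) := hx (by omega)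
    exact iff_of_false (fun h => hψ' ((hind.realize_pair_iff_of_gap ψ hw (x _).2 (x _).2 ht' hs'
      (iff_of_false hlt.not_ge hst.not_ge) (iff_of_true hlt.le hst.le)).1 h)) hji.not_gt

end IsIndiscernible

theorem natCast_mem_range_sub_one_union_range_add {n : ℕ} {k : Fin n} {l : Fin (n + 1)}
    (h₁ : l ≠ k.castSucc) (h₂ : l ≠ k.succ) :
    ((l : ℕ) : ℚ) ∈ Set.range (fun i : Fin (k + 1) => ((i : ℕ) : ℚ) - 1) ∪
      Set.range (fun j : Fin (n + 1) => ((k : ℕ) : ℚ) + 2 + (j : ℕ)) := by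
  rw [Ne, Fin.ext_iff, Fin.val_castSucc] at h₁
  rw [Ne, Fin.ext_iff, Fin.val_succ] at h₂
  rcases lt_or_gt_of_ne h₁ with hlt | hgt
  · exact Or.inl ⟨⟨l + 1, by omega⟩, by simp⟩
  · refine Or.inr ⟨⟨l - (k + 2), by omega⟩, ?_⟩
    push_cast [Nat.cast_sub (show (k : ℕ) + 2 ≤ l by omega)]
    ring

theorem order_property_of_not_totally_indiscernible_general {L : FirstOrder.Language.{u, v}}
    (M : Type (max u v)) [L.Structure M]
    (a : ℚ → M)
    (hind : IsIndiscernible (L := L) (fun i (_ : Fin 1) => a i))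
    (hnot : ¬ IsTotallyIndiscernible (L := L) (fun i (_ : Fin 1) => a i)) :
    ∃ (m n : ℕ) (ii : Fin (m + 1) → ℚ) (jj : Fin (n + 1) → ℚ) (istar jstar : ℚ),
      StrictMono ii ∧ StrictMono jj ∧
      ii (Fin.last m) < istar ∧ istar < jstar ∧ jstar < jj 0 ∧
      ¬ (∀ (k : ℕ) (ψ : L.Formula ((Fin 1 ⊕ Fin 1) ⊕ Fin k)) (c : Fin k → M),
          (∀ l, c l ∈ Set.range (fun l => a (ii l)) ∪ Set.range (fun l => a (jj l))) →
          (ψ.Realize (Sum.elim (Sum.elim (fun _ => a istar) (fun _ => a jstar)) c) ↔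
            ψ.Realize (Sum.elim (Sum.elim (fun _ => a jstar) (fun _ => a istar)) c))) ∧
      ∀ (k : ℕ) (ψ : L.Formula ((Fin 1 ⊕ Fin 1) ⊕ Fin k)) (c : Fin k → M),
        (∀ l, c l ∈ Set.range (fun l => a (ii l)) ∪ Set.range (fun l => a (jj l))) →
        ψ.Realize (Sum.elim (Sum.elim (fun _ => a istar) (fun _ => a jstar)) c) →
        ¬ ψ.Realize (Sum.elim (Sum.elim (fun _ => a jstar) (fun _ => a istar)) c) →
        HasOPWithParams ψ c := by
  obtain ⟨n, w, k, φ, hw, hφ⟩ := hind.exists_adjacent_swap_of_not_isTotallyIndiscernible hnot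
  -- the witness sits at `0, …, n`, with `A₀` indexed by `-1, …, k - 1` and `k + 2, …, k + n + 2`
  let g : Fin (n + 1) → ℚ := fun l => (l : ℕ)
  let ii : Fin (k + 1) → ℚ := fun l => (l : ℕ) - 1
  let jj : Fin (n + 1) → ℚ := fun l => (k : ℕ) + 2 + (l : ℕ)
  have hg : StrictMono g := fun _ _ h => by simpa [g] using h
  have hii : StrictMono ii := fun _ _ h => by simpa [ii] using h
  have hjj : StrictMono jj := fun _ _ h => by simpa [jj] using h
  have hlo : ii (Fin.last k) < g k.castSucc := by simp [ii, g]
  have hhi : g k.succ < jj 0 := by simp [jj, g]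
  have hI : Set.range ii ∪ Set.range jj ⊆ Set.Iic (ii (Fin.last k)) ∪ Set.Ici (jj 0) :=
    Set.union_subset_union (Set.range_subset_iff.2 fun l => hii.monotone (Fin.le_last l))
      (Set.range_subset_iff.2 fun l => hjj.monotone (Fin.zero_le l))
  have hA₀ : Set.range (fun l => a (ii l)) ∪ Set.range (fun l => a (jj l)) =
      a '' (Set.range ii ∪ Set.range jj) := by
    rw [Set.image_union, ← Set.range_comp, ← Set.range_comp]; rfl
  refine ⟨k, n, ii, jj, g k.castSucc, g k.succ, hii, hjj, hlo, hg Fin.castSucc_lt_succ, hhi, ?_⟩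
  rw [hA₀]
  exact ⟨hind.not_pairTypeSymmOver_of_adjacent_swap hw hg hφ
      (fun _ => natCast_mem_range_sub_one_union_range_add) ⟨_, Or.inl ⟨0, rfl⟩⟩,
    fun _ ψ _ hc => hind.hasOPWithParams_of_gap ψ hI hc hlo (hg Fin.castSucc_lt_succ) hhi⟩

/-- If `(aᵢ : i ∈ ℚ)` is an indiscernible, not totally indiscernible, sequence
of single elements, then there are indices `i₀ < ⋯ < i_m < i⋆ < j⋆ < j₀ < ⋯ < j_n` such that,
with `A₀ = {a_{i₀}, …, a_{i_m}, a_{j₀}, …, a_{j_n}}`, the types `tp(a_{i⋆}, a_{j⋆}/A₀)` and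
`tp(a_{j⋆}, a_{i⋆}/A₀)` differ, and every formula `ψ(x, y)` in two single variables with
parameters from `A₀` lying in the first type but not the second has the order property. -/
theorem order_property_of_not_totally_indiscernible {L : FirstOrder.Language.{u, v}}
    (T : L.Theory) (hT : T.IsComplete)
    (M : Type (max u v)) [L.Structure M] [Nonempty M] (hM : M ⊨ T)
    (a : ℚ → M)
    (hind : IsIndiscernible (L := L) (fun i (_ : Fin 1) => a i))
    (hnot : ¬ IsTotallyIndiscernible (L := L) (fun i (_ : Fin 1) => a i)) :
    ∃ (m n : ℕ) (ii : Fin (m + 1) → ℚ) (jj : Fin (n + 1) → ℚ) (istar jstar : ℚ),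
      StrictMono ii ∧ StrictMono jj ∧
      ii (Fin.last m) < istar ∧ istar < jstar ∧ jstar < jj 0 ∧
      ¬ (∀ (k : ℕ) (ψ : L.Formula ((Fin 1 ⊕ Fin 1) ⊕ Fin k)) (c : Fin k → M),
          (∀ l, c l ∈ Set.range (fun l => a (ii l)) ∪ Set.range (fun l => a (jj l))) →
          (ψ.Realize (Sum.elim (Sum.elim (fun _ => a istar) (fun _ => a jstar)) c) ↔
            ψ.Realize (Sum.elim (Sum.elim (fun _ => a jstar) (fun _ => a istar)) c))) ∧
      ∀ (k : ℕ) (ψ : L.Formula ((Fin 1 ⊕ Fin 1) ⊕ Fin k)) (c : Fin k → M),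
        (∀ l, c l ∈ Set.range (fun l => a (ii l)) ∪ Set.range (fun l => a (jj l))) →
        ψ.Realize (Sum.elim (Sum.elim (fun _ => a istar) (fun _ => a jstar)) c) →
        ¬ ψ.Realize (Sum.elim (Sum.elim (fun _ => a jstar) (fun _ => a istar)) c) →
        HasOPWithParams ψ c :=
  order_property_of_not_totally_indiscernible_general M a hind hnot
end
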